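/- arXiv:2009.12782 — 11 statements merged into one kernel-verified Lean document; each statement's English description precedes it below -/
import Mathlib

section
/- For every signed Gauss code with n crossings, |C⁺| + |C⁻| ≤ ⌊n²/4⌋. -/
/-- A signed Gauss code on a finite set `C` of crossing labels: each crossing `c`
has an over-occurrence `c⁺` at word position `pos c true` and an under-occurrence
`c⁻` at position `pos c false` (positions are integers, only their order matters),
all `2n` positions are distinct, and each crossing carries a sign `±1`. -/
structure GaussCode (C : Type) [Fintype C] [DecidableEq C] where
  pos : C → Bool → ℤ
  inj : Function.Injective fun p : C × Bool => pos p.1 p.2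
  sign : C → ℤ
  sign_unit : ∀ c, sign c = 1 ∨ sign c = -1

namespace GaussCode

variable {C : Type} [Fintype C] [DecidableEq C]

/-- `(x, y)` is an upper skew pair: `x⁺ < y⁻ < x⁻ < y⁺`. -/
def UpperSkew (G : GaussCode C) (x y : C) : Prop :=
  G.pos x true < G.pos y false ∧ G.pos y false < G.pos x false ∧
    G.pos x false < G.pos y true

/-- `(x, y)` is a lower skew pair: `x⁻ < y⁺ < x⁺ < y⁻`. -/
def LowerSkew (G : GaussCode C) (x y : C) : Prop :=
  G.pos x false < G.pos y true ∧ G.pos y true < G.pos x true ∧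
    G.pos x true < G.pos y false

instance (G : GaussCode C) (x y : C) : Decidable (G.UpperSkew x y) := by
  unfold UpperSkew; infer_instance

instance (G : GaussCode C) (x y : C) : Decidable (G.LowerSkew x y) := by
  unfold LowerSkew; infer_instance

/-- `P⁺`: the set of upper skew pairs. -/
def Pplus (G : GaussCode C) : Finset (C × C) :=
  Finset.univ.filter fun p => G.UpperSkew p.1 p.2

/-- `P⁻`: the set of lower skew pairs. -/
def Pminus (G : GaussCode C) : Finset (C × C) :=
  Finset.univ.filter fun p => G.LowerSkew p.1 p.2

/-- `C⁺`: the sum of the signs `ε(x)·ε(y)` over all upper skew pairs. -/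
def Cplus (G : GaussCode C) : ℤ := ∑ p ∈ G.Pplus, G.sign p.1 * G.sign p.2

/-- `C⁻`: the sum of the signs `ε(x)·ε(y)` over all lower skew pairs. -/
def Cminus (G : GaussCode C) : ℤ := ∑ p ∈ G.Pminus, G.sign p.1 * G.sign p.2

/-- The occurrence at position `q` immediately follows the one at position `p`:
no occurrence of the word lies strictly between them. -/
def Imm (G : GaussCode C) (p q : ℤ) : Prop :=
  p < q ∧ ∀ (d : C) (b : Bool), ¬ (p < G.pos d b ∧ G.pos d b < q)

end GaussCode

/-!
Every upper skew pair `(x, y)` has `x⁺ < x⁻` and `y⁻ < y⁺`, and every lower skew pair `(x, y)`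
has the reverse, so `(x, y) ↦ (x, y)` on `P⁺` and `(x, y) ↦ (y, x)` on `P⁻` land in `A × Aᶜ`,
where `A` is the set of crossings whose over-occurrence comes first. The two images are
disjoint (an upper pair `(x, y)` has `x⁺ < y⁻`, a lower pair `(y, x)` has `y⁻ < x⁺`), hence
`|C⁺| + |C⁻| ≤ |P⁺| + |P⁻| ≤ |A| (n - |A|) ≤ ⌊n²/4⌋`.
-/

theorem Nat.mul_le_add_sq_div_four (a b : ℕ) : a * b ≤ (a + b) ^ 2 / 4 := by
  rw [Nat.le_div_iff_mul_le four_pos, mul_comm, ← mul_assoc]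
  exact four_mul_le_sq_add a b

namespace GaussCode

open Finset

variable {C : Type} [Fintype C] [DecidableEq C] {G : GaussCode C} {x y : C}

theorem natAbs_sign (G : GaussCode C) (c : C) : (G.sign c).natAbs = 1 := by
  rcases G.sign_unit c with h | h <;> simp [h]

theorem natAbs_sum_sign_mul_sign_le_card (G : GaussCode C) (S : Finset (C × C)) :
    (∑ p ∈ S, G.sign p.1 * G.sign p.2).natAbs ≤ #S :=
  calc _ ≤ ∑ p ∈ S, (G.sign p.1 * G.sign p.2).natAbs := Int.natAbs_sum_le _ _
    _ = #S := by simp [Int.natAbs_mul, natAbs_sign]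

def overFirst (G : GaussCode C) : Finset C :=
  univ.filter fun c => G.pos c true < G.pos c false

theorem mem_overFirst : x ∈ G.overFirst ↔ G.pos x true < G.pos x false := by
  simp [overFirst]

theorem UpperSkew.mem_overFirst_left (h : G.UpperSkew x y) : x ∈ G.overFirst :=
  mem_overFirst.2 (h.1.trans h.2.1)

theorem UpperSkew.notMem_overFirst_right (h : G.UpperSkew x y) : y ∉ G.overFirst :=
  fun hy => (mem_overFirst.1 hy).not_gt (h.2.1.trans h.2.2)

theorem LowerSkew.mem_overFirst_right (h : G.LowerSkew x y) : y ∈ G.overFirst :=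
  mem_overFirst.2 (h.2.1.trans h.2.2)

theorem LowerSkew.notMem_overFirst_left (h : G.LowerSkew x y) : x ∉ G.overFirst :=
  fun hx => (mem_overFirst.1 hx).not_gt (h.1.trans h.2.1)

theorem UpperSkew.not_lowerSkew_swap (h : G.UpperSkew x y) : ¬ G.LowerSkew y x :=
  fun h' => lt_asymm h.1 h'.1

theorem Pplus_subset_overFirst_product_compl (G : GaussCode C) :
    G.Pplus ⊆ G.overFirst ×ˢ G.overFirstᶜ := by
  intro p hp
  have h : G.UpperSkew p.1 p.2 := (mem_filter.1 hp).2
  exact mem_product.2 ⟨h.mem_overFirst_left, mem_compl.2 h.notMem_overFirst_right⟩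

theorem image_swap_Pminus_subset_overFirst_product_compl (G : GaussCode C) :
    G.Pminus.image Prod.swap ⊆ G.overFirst ×ˢ G.overFirstᶜ := by
  rintro _ hq
  obtain ⟨p, hp, rfl⟩ := mem_image.1 hq
  have h : G.LowerSkew p.1 p.2 := (mem_filter.1 hp).2
  exact mem_product.2 ⟨h.mem_overFirst_right, mem_compl.2 h.notMem_overFirst_left⟩

theorem disjoint_Pplus_image_swap_Pminus (G : GaussCode C) :
    Disjoint G.Pplus (G.Pminus.image Prod.swap) := by
  refine disjoint_left.2 fun p hp hq => ?_
  obtain ⟨q, hmem, rfl⟩ := mem_image.1 hq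
  exact (mem_filter.1 hp).2.not_lowerSkew_swap (mem_filter.1 hmem).2

theorem card_Pplus_add_card_Pminus_le (G : GaussCode C) :
    #G.Pplus + #G.Pminus ≤ #G.overFirst * #G.overFirstᶜ := by
  rw [← card_image_of_injective G.Pminus Prod.swap_injective, ← card_union_of_disjoint
    G.disjoint_Pplus_image_swap_Pminus, ← card_product]
  exact card_le_card (union_subset G.Pplus_subset_overFirst_product_compl
    G.image_swap_Pminus_subset_overFirst_product_compl)

end GaussCode

open Finset in
/-- for every signed Gauss code with `n` crossings,
`|C⁺| + |C⁻| ≤ ⌊n²/4⌋`. -/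
theorem casson_abs_sum_le_crossing_sq_div_four {C : Type} [Fintype C] [DecidableEq C]
    (G : GaussCode C) :
    G.Cplus.natAbs + G.Cminus.natAbs ≤ Fintype.card C ^ 2 / 4 :=
  calc G.Cplus.natAbs + G.Cminus.natAbs ≤ #G.Pplus + #G.Pminus :=
        add_le_add (G.natAbs_sum_sign_mul_sign_le_card _) (G.natAbs_sum_sign_mul_sign_le_card _)
    _ ≤ #G.overFirst * #G.overFirstᶜ := G.card_Pplus_add_card_Pminus_le
    _ ≤ (#G.overFirst + #G.overFirstᶜ) ^ 2 / 4 := Nat.mul_le_add_sq_div_four _ _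
    _ = Fintype.card C ^ 2 / 4 := by rw [card_add_card_compl]
end

section
/- For every integer j ≥ 1, the upper skew pairs of the signed Gauss code W_j are exactly the pairs (x_{2k−1}, x_{2l}) with 1 ≤ k ≤ l ≤ j; in particular, the number of upper skew pairs of W_j equals j(j+1)/2. -/
/-- The signed Gauss code `W j` on the `2j` crossings `x₁, …, x_{2j}` (crossing `x_m`
is the index `m - 1 : Fin (2*j)`), all of sign `+1`, with word
`x₁⁺ x₂⁻ x₃⁺ x₄⁻ … x_{2j−1}⁺ x_{2j}⁻ x₁⁻ x₂⁺ x₃⁻ x₄⁺ … x_{2j−1}⁻ x_{2j}⁺`: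
the occurrence of `x_{i+1}` in the first half sits at position `i`,
the other occurrence at position `i + 2j`; for even `i` (odd label) the
over-occurrence comes first, for odd `i` the under-occurrence comes first. -/
def W (j : ℕ) : GaussCode (Fin (2 * j)) where
  pos i b :=
    if ((i : ℕ) % 2 = 0 ↔ b = true) then ((i : ℕ) : ℤ)
    else ((i : ℕ) : ℤ) + 2 * (j : ℤ)
  inj := by
    rintro ⟨i, b⟩ ⟨k, c⟩ h
    dsimp only at h
    have hi : (i : ℕ) < 2 * j := i.isLt
    have hk : (k : ℕ) < 2 * j := k.isLt
    split_ifs at h with h1 h2 h2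
    · have hik : i = k := Fin.ext (by omega)
      subst hik
      have hbc : b = c := by cases b <;> cases c <;> simp_all
      rw [hbc]
    · exact absurd h (by omega)
    · exact absurd h (by omega)
    · have hik : i = k := Fin.ext (by omega)
      subst hik
      have hbc : b = c := by cases b <;> cases c <;> simp_all
      rw [hbc]
  sign _ := 1
  sign_unit _ := Or.inl rfl

/-! In `W j` the first occurrence of the crossing with index `i` sits at position `i` and the
second at `i + 2j`. The pattern `x⁺ < y⁻ < x⁻ < y⁺` therefore forces `x⁺` and `y⁻` into the
first half and `x⁻`, `y⁺` into the second, i.e. `x` has even index and `y` odd index, and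
then both inequalities between the halves say that the index of `x` is below that of `y`.
Such pairs `(2k, 2l + 1)` correspond to the pairs `k ≤ l` below `j`, of which there are
`1 + 2 + ⋯ + j`. -/

open Finset

theorem Finset.card_filter_fst_le_snd_range_product (n : ℕ) :
    #{p ∈ range n ×ˢ range n | p.1 ≤ p.2} = n * (n + 1) / 2 := by
  have hcol (l : ℕ) (hl : l ∈ range n) : #{k ∈ range n | k ≤ l} = l + 1 := by
    rw [mem_range] at hl
    rw [← Nat.card_Iic l]
    congr 1
    ext k
    simp only [mem_filter, mem_range, mem_Iic]
    omega
  calc #{p ∈ range n ×ˢ range n | p.1 ≤ p.2}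
      = ∑ l ∈ range n, #{k ∈ range n | k ≤ l} := by
        rw [card_filter, sum_product_right]
        simp only [card_filter]
    _ = ∑ l ∈ range n, (l + 1) := sum_congr rfl hcol
    _ = ∑ i ∈ range (n + 1), i := by rw [sum_range_succ']; rfl
    _ = n * (n + 1) / 2 := by rw [sum_range_id, Nat.add_sub_cancel, mul_comm]

namespace W

variable {j : ℕ}

theorem upperSkew_iff (a b : Fin (2 * j)) :
    (W j).UpperSkew a b ↔ (a : ℕ) % 2 = 0 ∧ (b : ℕ) % 2 = 1 ∧ (a : ℕ) < b := by
  have ha := a.isLt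
  have hb := b.isLt
  simp only [GaussCode.UpperSkew, W, Bool.false_eq_true, iff_true, iff_false]
  split_ifs <;> omega

theorem mem_Pplus_iff (p : Fin (2 * j) × Fin (2 * j)) :
    p ∈ (W j).Pplus ↔ (p.1 : ℕ) % 2 = 0 ∧ (p.2 : ℕ) % 2 = 1 ∧ (p.1 : ℕ) < p.2 := by
  simp only [GaussCode.Pplus, mem_filter, mem_univ, true_and, upperSkew_iff]

theorem card_Pplus_eq : #(W j).Pplus = #{p ∈ range j ×ˢ range j | p.1 ≤ p.2} := by
  refine card_bij (fun p _ => ((p.1 : ℕ) / 2, (p.2 : ℕ) / 2)) ?maps ?inj ?surj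
  case maps =>
    rintro ⟨a, b⟩ hab
    simp only [mem_Pplus_iff] at hab
    simp only [mem_filter, mem_product, mem_range]
    omega
  case inj =>
    rintro ⟨a, b⟩ hab ⟨a', b'⟩ hab' h
    simp only [mem_Pplus_iff] at hab hab'
    simp only [Prod.mk.injEq] at h ⊢
    exact ⟨Fin.ext (by omega), Fin.ext (by omega)⟩
  case surj =>
    rintro ⟨k, l⟩ hkl
    simp only [mem_filter, mem_product, mem_range] at hkl
    refine ⟨(⟨2 * k, by omega⟩, ⟨2 * l + 1, by omega⟩), ?_, ?_⟩
    · simp only [mem_Pplus_iff]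
      omega
    · simp only [Prod.mk.injEq]
      omega

end W

theorem upperSkew_W_iff_general (j : ℕ) :
    (∀ a b : Fin (2 * j), (W j).UpperSkew a b ↔
      ∃ k l : ℕ, 1 ≤ k ∧ k ≤ l ∧ l ≤ j ∧
        (a : ℕ) = 2 * k - 2 ∧ (b : ℕ) = 2 * l - 1) ∧
    (W j).Pplus.card = j * (j + 1) / 2 := by
  refine ⟨fun a b => ?_, ?_⟩
  · have ha := a.isLt
    have hb := b.isLt
    rw [W.upperSkew_iff]
    constructor
    · rintro ⟨ha_even, hb_odd, hab⟩
      exact ⟨a / 2 + 1, b / 2 + 1, by omega, by omega, by omega, by omega, by omega⟩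
    · rintro ⟨k, l, hk, hkl, hlj, ha_eq, hb_eq⟩
      omega
  · rw [W.card_Pplus_eq, card_filter_fst_le_snd_range_product]

/-- for `j ≥ 1`, the upper skew pairs of `W j` are exactly the pairs
`(x_{2k−1}, x_{2l})` with `1 ≤ k ≤ l ≤ j` (crossing `x_m` has index `m - 1`);
in particular `|P⁺(W j)| = j(j+1)/2`. -/
theorem upperSkew_W_iff (j : ℕ) (hj : 1 ≤ j) :
    (∀ a b : Fin (2 * j), (W j).UpperSkew a b ↔
      ∃ k l : ℕ, 1 ≤ k ∧ k ≤ l ∧ l ≤ j ∧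
        (a : ℕ) = 2 * k - 2 ∧ (b : ℕ) = 2 * l - 1) ∧
    (W j).Pplus.card = j * (j + 1) / 2 :=
  upperSkew_W_iff_general j
end

section
/- For every integer j ≥ 1, the lower skew pairs of the signed Gauss code W_j are exactly the pairs (x_{2k}, x_{2l−1}) with 1 ≤ k < l ≤ j; in particular, the number of lower skew pairs of W_j equals j(j−1)/2. -/
/-! In `W j` the first occurrence of `x_{i+1}` (at position `i`) is its over-occurrence exactly
when `i` is even. Hence `(a, b)` is a lower skew pair iff `a` is odd, `b` is even and `a < b`,
and these pairs are the images of the pairs `k < l` in `Fin j` under `(k, l) ↦ (2k+1, 2l)`;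
there are `j.choose 2` of them. -/

namespace W

theorem lowerSkew_iff {j : ℕ} (a b : Fin (2 * j)) :
    (W j).LowerSkew a b ↔ (a : ℕ) % 2 = 1 ∧ (b : ℕ) % 2 = 0 ∧ a < b := by
  simp only [GaussCode.LowerSkew, W, Bool.false_eq_true, iff_true, iff_false, Fin.lt_def]
  split_ifs <;> omega

/-- The crossing pair `(x_{2k+2}, x_{2l+1})`, for `k, l < j`. -/
@[simps]
def evenOddPair (j : ℕ) : Fin j × Fin j ↪ Fin (2 * j) × Fin (2 * j) where
  toFun p := (⟨2 * p.1 + 1, by omega⟩, ⟨2 * p.2, by omega⟩)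
  inj' p q h := by
    simp only [Prod.mk.injEq, Fin.mk.injEq] at h
    exact Prod.ext (Fin.ext (by omega)) (Fin.ext (by omega))

theorem Pminus_eq_map (j : ℕ) :
    (W j).Pminus = ({p : Fin j × Fin j | p.1 < p.2} : Finset _).map (evenOddPair j) := by
  ext ⟨a, b⟩
  simp only [GaussCode.Pminus, Finset.mem_filter, Finset.mem_univ, true_and, lowerSkew_iff,
    Finset.mem_map, Prod.exists, evenOddPair_apply, Prod.mk.injEq, Fin.ext_iff, Fin.lt_def]
  constructor
  · rintro ⟨ha, hb, hab⟩
    exact ⟨⟨(a : ℕ) / 2, by omega⟩, ⟨(b : ℕ) / 2, by omega⟩, by dsimp only; omega,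
      by dsimp only; omega, by dsimp only; omega⟩
  · rintro ⟨k, l, hkl, ha, hb⟩
    omega

theorem card_Pminus (j : ℕ) : (W j).Pminus.card = j.choose 2 := by
  rw [Pminus_eq_map, Finset.card_map, Fintype.card_product_filter_lt, Fintype.card_fin]

end W

theorem lowerSkew_W_iff_general (j : ℕ) :
    (∀ a b : Fin (2 * j), (W j).LowerSkew a b ↔
      ∃ k l : ℕ, 1 ≤ k ∧ k < l ∧ l ≤ j ∧
        (a : ℕ) = 2 * k - 1 ∧ (b : ℕ) = 2 * l - 2) ∧
    (W j).Pminus.card = j * (j - 1) / 2 := by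
  refine ⟨fun a b => ?_, by rw [W.card_Pminus, Nat.choose_two_right]⟩
  have ha := a.isLt
  have hb := b.isLt
  rw [W.lowerSkew_iff, Fin.lt_def]
  constructor
  · rintro ⟨ha_odd, hb_even, hab⟩
    exact ⟨((a : ℕ) + 1) / 2, (b : ℕ) / 2 + 1, by omega, by omega, by omega, by omega, by omega⟩
  · rintro ⟨k, l, hk, hkl, -, ha_eq, hb_eq⟩
    omega

/-- for `j ≥ 1`, the lower skew pairs of `W j` are exactly the pairs
`(x_{2k}, x_{2l−1})` with `1 ≤ k < l ≤ j` (crossing `x_m` has index `m - 1`);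
in particular `|P⁻(W j)| = j(j−1)/2`. -/
theorem lowerSkew_W_iff (j : ℕ) (hj : 1 ≤ j) :
    (∀ a b : Fin (2 * j), (W j).LowerSkew a b ↔
      ∃ k l : ℕ, 1 ≤ k ∧ k < l ∧ l ≤ j ∧
        (a : ℕ) = 2 * k - 1 ∧ (b : ℕ) = 2 * l - 2) ∧
    (W j).Pminus.card = j * (j - 1) / 2 :=
  lowerSkew_W_iff_general j
end

section
/- For every integer j ≥ 1, C⁺(W_j) + C⁻(W_j) = j² = ⌊(2j)²/4⌋; hence the code W_j, which has 2j crossings, attains equality in the bound |C⁺| + |C⁻| ≤ ⌊n²/4⌋. -/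
open Finset

namespace GaussCode

variable {C : Type} [Fintype C] [DecidableEq C] (G : GaussCode C)

theorem disjoint_Pplus_Pminus : Disjoint G.Pplus G.Pminus := by
  rw [disjoint_left]
  rintro ⟨x, y⟩ hU hL
  have hxy := (mem_filter.1 hU).2
  have hyx := (mem_filter.1 hL).2
  unfold UpperSkew at hxy
  unfold LowerSkew at hyx
  omega

theorem Cplus_eq_card_Pplus (h : ∀ c, G.sign c = 1) : G.Cplus = #G.Pplus := by
  simp [Cplus, h]

theorem Cminus_eq_card_Pminus (h : ∀ c, G.sign c = 1) : G.Cminus = #G.Pminus := by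
  simp [Cminus, h]

end GaussCode

theorem card_lt_of_mod_two_ne (j : ℕ) :
    #{p : Fin (2 * j) × Fin (2 * j) | (p.1 : ℕ) < p.2 ∧ (p.1 : ℕ) % 2 ≠ (p.2 : ℕ) % 2} =
      j * j := by
  let half : Fin (2 * j) → Fin j := fun x => ⟨x / 2, by omega⟩
  let even : Fin j → Fin (2 * j) := fun a => ⟨2 * a, by omega⟩
  let odd : Fin j → Fin (2 * j) := fun b => ⟨2 * b + 1, by omega⟩
  calc _ = #(univ : Finset (Fin j × Fin j)) := by
        refine card_nbij'
          (fun p => if (p.1 : ℕ) % 2 = 0 then (half p.1, half p.2) else (half p.2, half p.1))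
          (fun q => if q.1 ≤ q.2 then (even q.1, odd q.2) else (odd q.2, even q.1))
          (by simp) ?_ ?_ ?_ <;>
        · intro p hp
          simp only [coe_filter, mem_univ, true_and, Set.mem_ofPred_eq] at hp ⊢
          split_ifs <;> simp only [Prod.ext_iff, Fin.ext_iff, Fin.le_def, half, even, odd] at * <;>
            omega
    _ = j * j := by simp

theorem W_upperSkew_iff {j : ℕ} (x y : Fin (2 * j)) :
    (W j).UpperSkew x y ↔ (x : ℕ) % 2 = 0 ∧ (y : ℕ) % 2 = 1 ∧ (x : ℕ) < y := by
  have := x.isLt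
  have := y.isLt
  simp only [GaussCode.UpperSkew, W]
  split_ifs <;> simp_all <;> omega

theorem W_lowerSkew_iff {j : ℕ} (x y : Fin (2 * j)) :
    (W j).LowerSkew x y ↔ (x : ℕ) % 2 = 1 ∧ (y : ℕ) % 2 = 0 ∧ (x : ℕ) < y := by
  have := x.isLt
  have := y.isLt
  simp only [GaussCode.LowerSkew, W]
  split_ifs <;> simp_all <;> omega

theorem W_Pplus_union_Pminus (j : ℕ) :
    (W j).Pplus ∪ (W j).Pminus = univ.filter fun p : Fin (2 * j) × Fin (2 * j) =>
      (p.1 : ℕ) < p.2 ∧ (p.1 : ℕ) % 2 ≠ (p.2 : ℕ) % 2 := by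
  ext ⟨x, y⟩
  simp only [GaussCode.Pplus, GaussCode.Pminus, mem_union, mem_filter, mem_univ, true_and,
    W_upperSkew_iff, W_lowerSkew_iff]
  omega

theorem W_card_Pplus_add_card_Pminus (j : ℕ) : #(W j).Pplus + #(W j).Pminus = j * j := by
  rw [← card_union_of_disjoint (W j).disjoint_Pplus_Pminus, W_Pplus_union_Pminus,
    card_lt_of_mod_two_ne]

theorem W_attains_crossing_bound_general (j : ℕ) :
    (W j).Cplus + (W j).Cminus = (j : ℤ) ^ 2 ∧
    (j : ℤ) ^ 2 = (((2 * j) ^ 2 / 4 : ℕ) : ℤ) ∧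
    (W j).Cplus.natAbs + (W j).Cminus.natAbs =
      Fintype.card (Fin (2 * j)) ^ 2 / 4 := by
  have hsign : ∀ c, (W j).sign c = 1 := fun _ => rfl
  have hquarter : (2 * j) ^ 2 / 4 = j * j := by
    rw [mul_pow, sq j]
    norm_num
  rw [(W j).Cplus_eq_card_Pplus hsign, (W j).Cminus_eq_card_Pminus hsign, Fintype.card_fin,
    hquarter, Int.natAbs_natCast, Int.natAbs_natCast, W_card_Pplus_add_card_Pminus, sq]
  exact ⟨by exact_mod_cast W_card_Pplus_add_card_Pminus j, by push_cast; rfl, rfl⟩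

/-- for `j ≥ 1`, `C⁺(W j) + C⁻(W j) = j² = ⌊(2j)²/4⌋`; hence the code
`W j`, which has `2j` crossings, attains equality in `|C⁺| + |C⁻| ≤ ⌊n²/4⌋`. -/
theorem W_attains_crossing_bound (j : ℕ) (hj : 1 ≤ j) :
    (W j).Cplus + (W j).Cminus = (j : ℤ) ^ 2 ∧
    (j : ℤ) ^ 2 = (((2 * j) ^ 2 / 4 : ℕ) : ℤ) ∧
    (W j).Cplus.natAbs + (W j).Cminus.natAbs =
      Fintype.card (Fin (2 * j)) ^ 2 / 4 :=
  W_attains_crossing_bound_general j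
end

section
/- Let G₁ and G₂ be signed Gauss codes whose sets of crossing labels are disjoint, and let G be the signed Gauss code whose word is the concatenation of the word of G₁ followed by the word of G₂, with the combined sign function. Then the skew pairs of G are exactly the skew pairs of G₁ together with the skew pairs of G₂, and consequently C⁺(G) = C⁺(G₁) + C⁺(G₂) and C⁻(G) = C⁻(G₁) + C⁻(G₂). (This is the additivity of C± under the product of knotoids.) -/
theorem Finset.sum_filter_sum_type_of_not_mixed {α β M : Type*} [Fintype α] [Fintype β]
    [AddCommMonoid M] (R : α ⊕ β → α ⊕ β → Prop) [DecidableRel R] (f : α ⊕ β → α ⊕ β → M)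
    (hlr : ∀ a b, ¬ R (.inl a) (.inr b)) (hrl : ∀ a b, ¬ R (.inr b) (.inl a)) :
    ∑ p ∈ univ.filter (fun p : (α ⊕ β) × (α ⊕ β) => R p.1 p.2), f p.1 p.2 =
      ∑ p ∈ univ.filter (fun p : α × α => R (.inl p.1) (.inl p.2)), f (.inl p.1) (.inl p.2) +
        ∑ p ∈ univ.filter (fun p : β × β => R (.inr p.1) (.inr p.2)), f (.inr p.1) (.inr p.2) := by
  simp only [sum_filter, Fintype.sum_prod_type, Fintype.sum_sum_type, hlr, hrl, if_false,
    sum_const_zero, add_zero, zero_add]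

namespace GaussCode

variable {C D : Type} [Fintype C] [DecidableEq C] [Fintype D] [DecidableEq D]

section Embedding

variable {G : GaussCode C} {G' : GaussCode D} {f : C → D}
  (h : ∀ c b c' b', G'.pos (f c) b < G'.pos (f c') b' ↔ G.pos c b < G.pos c' b')
include h

theorem upperSkew_iff_of_pos_lt_iff (x y : C) : G'.UpperSkew (f x) (f y) ↔ G.UpperSkew x y := by
  simp only [UpperSkew, h]

theorem lowerSkew_iff_of_pos_lt_iff (x y : C) : G'.LowerSkew (f x) (f y) ↔ G.LowerSkew x y := by
  simp only [LowerSkew, h]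

end Embedding

section Separated

variable {G : GaussCode C} {x y : C} (h : ∀ b b', G.pos x b < G.pos y b')
include h

theorem not_upperSkew_of_pos_lt : ¬ G.UpperSkew x y ∧ ¬ G.UpperSkew y x :=
  ⟨fun hs => (h false false).not_gt hs.2.1, fun hs => (h false true).not_gt hs.1⟩

theorem not_lowerSkew_of_pos_lt : ¬ G.LowerSkew x y ∧ ¬ G.LowerSkew y x :=
  ⟨fun hs => (h true true).not_gt hs.2.1, fun hs => (h true false).not_gt hs.1⟩

end Separated

end GaussCode

/-- if `G` is the concatenation of `G₁` and `G₂` (on disjoint crossing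
sets, modelled by a sum type: the relative order of occurrences coming from each
`Gᵢ` is preserved, every occurrence from `G₁` precedes every occurrence from `G₂`,
and signs are inherited), then the skew pairs of `G` are exactly those of `G₁`
together with those of `G₂`, and `C±(G) = C±(G₁) + C±(G₂)`. -/
theorem casson_concat_additive {C₁ C₂ : Type}
    [Fintype C₁] [DecidableEq C₁] [Fintype C₂] [DecidableEq C₂]
    (G₁ : GaussCode C₁) (G₂ : GaussCode C₂) (G : GaussCode (C₁ ⊕ C₂))
    (horder₁ : ∀ (c : C₁) (b : Bool) (c' : C₁) (b' : Bool),
      G.pos (.inl c) b < G.pos (.inl c') b' ↔ G₁.pos c b < G₁.pos c' b')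
    (horder₂ : ∀ (c : C₂) (b : Bool) (c' : C₂) (b' : Bool),
      G.pos (.inr c) b < G.pos (.inr c') b' ↔ G₂.pos c b < G₂.pos c' b')
    (hsep : ∀ (c : C₁) (b : Bool) (c' : C₂) (b' : Bool),
      G.pos (.inl c) b < G.pos (.inr c') b')
    (hsign₁ : ∀ c : C₁, G.sign (.inl c) = G₁.sign c)
    (hsign₂ : ∀ c : C₂, G.sign (.inr c) = G₂.sign c) :
    (∀ x y : C₁, (G.UpperSkew (.inl x) (.inl y) ↔ G₁.UpperSkew x y) ∧
        (G.LowerSkew (.inl x) (.inl y) ↔ G₁.LowerSkew x y)) ∧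
    (∀ x y : C₂, (G.UpperSkew (.inr x) (.inr y) ↔ G₂.UpperSkew x y) ∧
        (G.LowerSkew (.inr x) (.inr y) ↔ G₂.LowerSkew x y)) ∧
    (∀ (x : C₁) (y : C₂),
        ¬ G.UpperSkew (.inl x) (.inr y) ∧ ¬ G.UpperSkew (.inr y) (.inl x) ∧
        ¬ G.LowerSkew (.inl x) (.inr y) ∧ ¬ G.LowerSkew (.inr y) (.inl x)) ∧
    G.Cplus = G₁.Cplus + G₂.Cplus ∧ G.Cminus = G₁.Cminus + G₂.Cminus := by
  have hU₁ := GaussCode.upperSkew_iff_of_pos_lt_iff horder₁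
  have hL₁ := GaussCode.lowerSkew_iff_of_pos_lt_iff horder₁
  have hU₂ := GaussCode.upperSkew_iff_of_pos_lt_iff horder₂
  have hL₂ := GaussCode.lowerSkew_iff_of_pos_lt_iff horder₂
  have hU := fun x y => GaussCode.not_upperSkew_of_pos_lt (hsep x · y ·)
  have hL := fun x y => GaussCode.not_lowerSkew_of_pos_lt (hsep x · y ·)
  refine ⟨fun x y => ⟨hU₁ x y, hL₁ x y⟩, fun x y => ⟨hU₂ x y, hL₂ x y⟩,
    fun x y => ⟨(hU x y).1, (hU x y).2, (hL x y).1, (hL x y).2⟩, ?_, ?_⟩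
  · rw [GaussCode.Cplus, GaussCode.Pplus,
      Finset.sum_filter_sum_type_of_not_mixed _ (fun x y => G.sign x * G.sign y)
      (fun x y => (hU x y).1) (fun x y => (hU x y).2)]
    simp only [hU₁, hU₂, hsign₁, hsign₂, GaussCode.Cplus, GaussCode.Pplus]
  · rw [GaussCode.Cminus, GaussCode.Pminus,
      Finset.sum_filter_sum_type_of_not_mixed _ (fun x y => G.sign x * G.sign y)
      (fun x y => (hL x y).1) (fun x y => (hL x y).2)]
    simp only [hL₁, hL₂, hsign₁, hsign₂, GaussCode.Cminus, GaussCode.Pminus]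
end

section
/- Let G be a signed Gauss code, let x be a crossing of G with x⁺ < x⁻, let s = ε(x), and let G′ be obtained from G by switching the crossing x. Then C⁺(G) − C⁺(G′) = s · Σ ε(y), where the sum ranges over all crossings y ≠ x such that exactly one of the two occurrences of y lies strictly between x⁺ and x⁻ in the word of G and that occurrence is the under-occurrence y⁻. (This is the upper skein relation for the Casson-type invariant of knotoids.) -/
/-!
Only pairs involving `x` can change. Since `x⁺ < x⁻` in `G` and `x⁻ < x⁺` in `G′`, the only
skew pairs involving `x` are `(x, y)` in `G`, where `x⁺ < y⁻ < x⁻ < y⁺`, and `(y, x)` in `G′`,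
where `y⁺ < x⁺ < y⁻ < x⁻` with sign `-ε(x)ε(y)`. Both contribute `ε(x)ε(y)` to the difference,
and together they describe exactly the crossings `y` with `y⁻` but not `y⁺` between `x⁺` and `x⁻`.
-/

namespace GaussCode

variable {C : Type} [Fintype C] [DecidableEq C]

def upperTerm (G : GaussCode C) (a b : C) : ℤ :=
  if G.UpperSkew a b then G.sign a * G.sign b else 0

theorem Cplus_eq_sum_upperTerm (G : GaussCode C) : G.Cplus = ∑ a, ∑ b, G.upperTerm a b := by
  rw [Cplus, Pplus, Finset.sum_filter, ← Finset.univ_product_univ, Finset.sum_product]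
  rfl

theorem pos_ne_of_ne (G : GaussCode C) {a b : C} (h : a ≠ b) (s t : Bool) :
    G.pos a s ≠ G.pos b t := fun he =>
  h (congrArg Prod.fst (G.inj (a₁ := (a, s)) (a₂ := (b, t)) he))

theorem UpperSkew.over_lt_under_left {G : GaussCode C} {a b : C} (h : G.UpperSkew a b) :
    G.pos a true < G.pos a false := by
  obtain ⟨h₁, h₂, -⟩ := h
  omega

theorem UpperSkew.under_lt_over_right {G : GaussCode C} {a b : C} (h : G.UpperSkew a b) :
    G.pos b false < G.pos b true := by
  obtain ⟨-, h₂, h₃⟩ := h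
  omega

theorem upperTerm_left_eq_zero {G : GaussCode C} {x : C}
    (hx : G.pos x false < G.pos x true) (b : C) : G.upperTerm x b = 0 :=
  if_neg fun h => (lt_asymm hx h.over_lt_under_left).elim

theorem upperTerm_right_eq_zero {G : GaussCode C} {x : C}
    (hx : G.pos x true < G.pos x false) (a : C) : G.upperTerm a x = 0 :=
  if_neg fun h => (lt_asymm hx h.under_lt_over_right).elim

structure IsSwitch (G G' : GaussCode C) (x : C) : Prop where
  pos_self : ∀ b, G'.pos x b = G.pos x (!b)
  pos_of_ne : ∀ y, y ≠ x → ∀ b, G'.pos y b = G.pos y b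
  sign_self : G'.sign x = -G.sign x
  sign_of_ne : ∀ y, y ≠ x → G'.sign y = G.sign y

namespace IsSwitch

variable {G G' : GaussCode C} {x : C}

theorem upperTerm_of_ne (h : IsSwitch G G' x) {a b : C} (ha : a ≠ x) (hb : b ≠ x) :
    G'.upperTerm a b = G.upperTerm a b := by
  simp only [upperTerm, UpperSkew, h.pos_of_ne a ha, h.pos_of_ne b hb, h.sign_of_ne a ha,
    h.sign_of_ne b hb]

theorem upperTerm_left_eq_zero (h : IsSwitch G G' x) (hx : G.pos x true < G.pos x false)
    (b : C) : G'.upperTerm x b = 0 :=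
  GaussCode.upperTerm_left_eq_zero (by simpa [h.pos_self] using hx) b

theorem upperTerm_right (h : IsSwitch G G' x) {a : C} (ha : a ≠ x) :
    G'.upperTerm a x = if G.pos a true < G.pos x true ∧ G.pos x true < G.pos a false ∧
      G.pos a false < G.pos x false then -G.sign x * G.sign a else 0 := by
  simp only [upperTerm, UpperSkew, h.pos_of_ne a ha, h.pos_self, h.sign_of_ne a ha, h.sign_self,
    Bool.not_true, Bool.not_false, mul_comm (G.sign a)]

theorem upperTerm_sub (h : IsSwitch G G' x) (hx : G.pos x true < G.pos x false) (a b : C) :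
    G.upperTerm a b - G'.upperTerm a b =
      (if a = x then G.upperTerm x b else 0) - (if b = x then G'.upperTerm a x else 0) := by
  by_cases ha : a = x <;> by_cases hb : b = x
  · subst ha hb
    simp [h.upperTerm_left_eq_zero hx]
  · subst ha
    simp [hb, h.upperTerm_left_eq_zero hx]
  · subst hb
    simp [ha, upperTerm_right_eq_zero hx]
  · simp [ha, hb, h.upperTerm_of_ne ha hb]

theorem Cplus_sub (h : IsSwitch G G' x) (hx : G.pos x true < G.pos x false) :
    G.Cplus - G'.Cplus = ∑ y, (G.upperTerm x y - G'.upperTerm y x) := by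
  simp only [Cplus_eq_sum_upperTerm, ← Finset.sum_sub_distrib, h.upperTerm_sub hx]
  simp only [Finset.sum_sub_distrib]
  rw [Finset.sum_comm (f := fun _ _ => ite _ _ _)]
  simp only [Finset.sum_ite_eq', Finset.mem_univ, if_true]

/-- The two contributions of `y` cover the two ways `y⁺` can avoid the interval `(x⁺, x⁻)`
while `y⁻` lies in it: after it, or before it. -/
theorem upperTerm_sub_upperTerm (h : IsSwitch G G' x) (hx : G.pos x true < G.pos x false)
    (y : C) :
    G.upperTerm x y - G'.upperTerm y x = G.sign x * if y ≠ x ∧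
        (G.pos x true < G.pos y false ∧ G.pos y false < G.pos x false) ∧
        ¬ (G.pos x true < G.pos y true ∧ G.pos y true < G.pos x false) then G.sign y else 0 := by
  by_cases hy : y = x
  · subst hy
    simp [upperTerm_right_eq_zero hx, h.upperTerm_left_eq_zero hx]
  have hne_over := G.pos_ne_of_ne hy true true
  have hne_under := G.pos_ne_of_ne hy true false
  rw [h.upperTerm_right hy, upperTerm]
  simp only [ne_eq, hy, not_false_eq_true, true_and]
  split_ifs <;> simp only [UpperSkew] at * <;> first | omega | ring

end IsSwitch

end GaussCode

/-- upper skein relation: let `x` be a crossing of `G` with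
`x⁺ < x⁻`, `s = ε(x)`, and let `G′` be obtained from `G` by switching `x`
(interchanging the markers of the two occurrences of `x` and negating `ε(x)`).
Then `C⁺(G) − C⁺(G′) = s · Σ ε(y)`, the sum over all crossings `y ≠ x` such that
exactly one occurrence of `y` lies strictly between `x⁺` and `x⁻` and that
occurrence is `y⁻`. -/
theorem casson_upper_skein {C : Type} [Fintype C] [DecidableEq C]
    (G G' : GaussCode C) (x : C)
    (hx : G.pos x true < G.pos x false)
    (hpos_x : ∀ b : Bool, G'.pos x b = G.pos x (!b))
    (hpos : ∀ y : C, y ≠ x → ∀ b : Bool, G'.pos y b = G.pos y b)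
    (hsign_x : G'.sign x = - G.sign x)
    (hsign : ∀ y : C, y ≠ x → G'.sign y = G.sign y) :
    G.Cplus - G'.Cplus =
      G.sign x * ∑ y ∈ Finset.univ.filter (fun y : C => y ≠ x ∧
          (G.pos x true < G.pos y false ∧ G.pos y false < G.pos x false) ∧
          ¬ (G.pos x true < G.pos y true ∧ G.pos y true < G.pos x false)),
        G.sign y := by
  have hs : GaussCode.IsSwitch G G' x := ⟨hpos_x, hpos, hsign_x, hsign⟩
  rw [hs.Cplus_sub hx, Finset.sum_filter, Finset.mul_sum]
  exact Finset.sum_congr rfl fun y _ => hs.upperTerm_sub_upperTerm hx y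
end

section
/- Let G be a signed Gauss code and let c be a crossing whose two occurrences are adjacent in the word (one immediately follows the other). Then c belongs to no upper and no lower skew pair of G, and if G′ denotes the code obtained from G by deleting both occurrences of c, then C⁺(G′) = C⁺(G) and C⁻(G′) = C⁻(G). (This is invariance of C± under the first Reidemeister move at the Gauss-code level.) -/
namespace GaussCode

variable {C : Type} [Fintype C] [DecidableEq C]

/-- The code obtained by deleting both occurrences of the crossing `c`
(the remaining occurrences keep their positions and markers, signs are
inherited). -/
def erase (G : GaussCode C) (c : C) : GaussCode {d : C // d ≠ c} where
  pos d b := G.pos d.1 b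
  inj := by
    rintro ⟨⟨d, hd⟩, b⟩ ⟨⟨e, he⟩, b'⟩ h
    dsimp only at h
    have h2 := G.inj (a₁ := (d, b)) (a₂ := (e, b')) h
    simp only [Prod.mk.injEq] at h2
    simp only [Prod.mk.injEq, Subtype.mk.injEq]
    exact h2
  sign d := G.sign d.1
  sign_unit d := G.sign_unit d.1

end GaussCode

/-! In a skew pair each crossing has an occurrence of the other strictly between its own two
occurrences. So a crossing whose two occurrences are adjacent lies in no skew pair, and deleting
it leaves the sets `P⁺`, `P⁻` unchanged up to the inclusion of the remaining crossings. -/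

theorem Finset.sum_filter_subtype_ne {C M : Type*} [Fintype C] [DecidableEq C]
    [AddCommMonoid M] {c : C} (R : C → C → Prop) [DecidableRel R] (f : C → C → M)
    (hc : ∀ y, ¬ R c y ∧ ¬ R y c) :
    ∑ p ∈ Finset.univ.filter (fun p : {d // d ≠ c} × {d // d ≠ c} => R p.1 p.2), f p.1 p.2 =
      ∑ p ∈ Finset.univ.filter (fun p : C × C => R p.1 p.2), f p.1 p.2 := by
  let incl : {d // d ≠ c} × {d // d ≠ c} ↪ C × C := .prodMap (.subtype _) (.subtype _)
  have hmap : (Finset.univ.filter fun p : {d // d ≠ c} × {d // d ≠ c} => R p.1 p.2).map incl =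
      Finset.univ.filter fun p : C × C => R p.1 p.2 := by
    ext ⟨x, y⟩
    simp only [Finset.mem_map, Finset.mem_filter, Finset.mem_univ, true_and]
    constructor
    · rintro ⟨⟨⟨x', _⟩, ⟨y', _⟩⟩, h, hxy⟩
      obtain ⟨rfl, rfl⟩ := Prod.mk.inj hxy
      exact h
    · intro h
      exact ⟨(⟨x, fun hx => (hc y).1 (hx ▸ h)⟩, ⟨y, fun hy => (hc x).2 (hy ▸ h)⟩), h, rfl⟩
  rw [← hmap, Finset.sum_map]
  rfl

namespace GaussCode

variable {C : Type} [Fintype C] [DecidableEq C]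

def Between (G : GaussCode C) (c : C) (p : ℤ) : Prop :=
  min (G.pos c true) (G.pos c false) < p ∧ p < max (G.pos c true) (G.pos c false)

variable {G : GaussCode C} {x y : C}

theorem UpperSkew.between_left (h : G.UpperSkew x y) : G.Between x (G.pos y false) :=
  ⟨(min_le_left _ _).trans_lt h.1, h.2.1.trans_le (le_max_right _ _)⟩

theorem UpperSkew.between_right (h : G.UpperSkew x y) : G.Between y (G.pos x false) :=
  ⟨(min_le_right _ _).trans_lt h.2.1, h.2.2.trans_le (le_max_left _ _)⟩

theorem LowerSkew.between_left (h : G.LowerSkew x y) : G.Between x (G.pos y true) :=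
  ⟨(min_le_right _ _).trans_lt h.1, h.2.1.trans_le (le_max_left _ _)⟩

theorem LowerSkew.between_right (h : G.LowerSkew x y) : G.Between y (G.pos x true) :=
  ⟨(min_le_left _ _).trans_lt h.2.1, h.2.2.trans_le (le_max_right _ _)⟩

theorem not_skew_of_forall_not_between {c : C} (hc : ∀ d b, ¬ G.Between c (G.pos d b))
    (y : C) : ¬ G.UpperSkew c y ∧ ¬ G.UpperSkew y c ∧ ¬ G.LowerSkew c y ∧ ¬ G.LowerSkew y c :=
  ⟨fun h => hc _ _ h.between_left, fun h => hc _ _ h.between_right,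
    fun h => hc _ _ h.between_left, fun h => hc _ _ h.between_right⟩

theorem Cplus_erase {c : C} (hc : ∀ y, ¬ G.UpperSkew c y ∧ ¬ G.UpperSkew y c) :
    (G.erase c).Cplus = G.Cplus :=
  Finset.sum_filter_subtype_ne (fun x y => G.UpperSkew x y) (fun x y => G.sign x * G.sign y) hc

theorem Cminus_erase {c : C} (hc : ∀ y, ¬ G.LowerSkew c y ∧ ¬ G.LowerSkew y c) :
    (G.erase c).Cminus = G.Cminus :=
  Finset.sum_filter_subtype_ne (fun x y => G.LowerSkew x y) (fun x y => G.sign x * G.sign y) hc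

end GaussCode

/-- first Reidemeister move: if the two occurrences of a crossing
`c` are adjacent in the word (no occurrence lies strictly between them), then `c`
belongs to no skew pair, and deleting both occurrences of `c` leaves `C⁺` and
`C⁻` unchanged. -/
theorem casson_R1_invariance {C : Type} [Fintype C] [DecidableEq C]
    (G : GaussCode C) (c : C)
    (hadj : ∀ (d : C) (b : Bool),
      ¬ (min (G.pos c true) (G.pos c false) < G.pos d b ∧
         G.pos d b < max (G.pos c true) (G.pos c false))) :
    (∀ y : C, ¬ G.UpperSkew c y ∧ ¬ G.UpperSkew y c ∧
        ¬ G.LowerSkew c y ∧ ¬ G.LowerSkew y c) ∧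
    (G.erase c).Cplus = G.Cplus ∧ (G.erase c).Cminus = G.Cminus := by
  have hskew := GaussCode.not_skew_of_forall_not_between hadj
  exact ⟨hskew, GaussCode.Cplus_erase fun y => ⟨(hskew y).1, (hskew y).2.1⟩,
    GaussCode.Cminus_erase fun y => ⟨(hskew y).2.2.1, (hskew y).2.2.2⟩⟩
end

section
/- Let G be a signed Gauss code containing distinct crossings x and y such that the occurrence y⁺ immediately follows x⁺ and the occurrence y⁻ immediately follows x⁻ in the word. Then: (a) neither (x, y) nor (y, x) is a skew pair of G; and (b) for every crossing z ∉ {x, y}, the pair (x, z) is an upper (resp. lower) skew pair if and only if (y, z) is an upper (resp. lower) skew pair, and the pair (z, x) is an upper (resp. lower) skew pair if and only if (z, y) is an upper (resp. lower) skew pair. -/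
/-!
Since `y⁺` immediately follows `x⁺`, no occurrence of a third crossing `z` lies between them, so
every occurrence of `z` compares with `x⁺` exactly as it compares with `y⁺`; likewise for `x⁻`
and `y⁻`. The skew conditions only involve such comparisons, so they cannot tell `x` from `y`.
The pair `(x, y)` itself is never skew, because each skew condition reverses the order of
`x⁺, y⁺` or of `x⁻, y⁻`.
-/

namespace GaussCode

variable {C : Type} [Fintype C] [DecidableEq C] (G : GaussCode C)

theorem pos_ne_pos {z w : C} (h : z ≠ w) (b b' : Bool) : G.pos z b ≠ G.pos w b' :=
  fun hpos => h (congrArg Prod.fst (@G.inj (z, b) (w, b') hpos))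

namespace Imm

variable {G} {p q : ℤ} {d : C} {b : Bool}

theorem pos_lt_iff (h : G.Imm p q) (hp : G.pos d b ≠ p) : G.pos d b < p ↔ G.pos d b < q :=
  ⟨fun hr => hr.trans h.1, fun hr => (le_of_not_gt fun hpr => h.2 d b ⟨hpr, hr⟩).lt_of_ne hp⟩

theorem lt_pos_iff (h : G.Imm p q) (hq : G.pos d b ≠ q) : p < G.pos d b ↔ q < G.pos d b :=
  ⟨fun hr => (le_of_not_gt fun hrq => h.2 d b ⟨hr, hrq⟩).lt_of_ne' hq, h.1.trans⟩

end Imm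

end GaussCode

open GaussCode in
theorem casson_R2_configuration_general {C : Type} [Fintype C] [DecidableEq C]
    (G : GaussCode C) (x y : C)
    (himm_over : G.Imm (G.pos x true) (G.pos y true))
    (himm_under : G.Imm (G.pos x false) (G.pos y false)) :
    (¬ G.UpperSkew x y ∧ ¬ G.UpperSkew y x ∧
      ¬ G.LowerSkew x y ∧ ¬ G.LowerSkew y x) ∧
    (∀ z : C, z ≠ x → z ≠ y →
      (G.UpperSkew x z ↔ G.UpperSkew y z) ∧ (G.LowerSkew x z ↔ G.LowerSkew y z) ∧
      (G.UpperSkew z x ↔ G.UpperSkew z y) ∧ (G.LowerSkew z x ↔ G.LowerSkew z y)) := by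
  have hover := himm_over.1
  have hunder := himm_under.1
  refine ⟨⟨?_, ?_, ?_, ?_⟩, fun z hzx hzy => ?_⟩
  iterate 4 (rintro ⟨h₁, h₂, h₃⟩; omega)
  have pos_lt_over (b : Bool) := himm_over.pos_lt_iff (G.pos_ne_pos hzx b true)
  have lt_pos_over (b : Bool) := himm_over.lt_pos_iff (G.pos_ne_pos hzy b true)
  have pos_lt_under (b : Bool) := himm_under.pos_lt_iff (G.pos_ne_pos hzx b false)
  have lt_pos_under (b : Bool) := himm_under.lt_pos_iff (G.pos_ne_pos hzy b false)
  simp only [UpperSkew, LowerSkew, pos_lt_over, lt_pos_over, pos_lt_under, lt_pos_under,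
    and_self]

/-- if `y⁺` immediately follows `x⁺` and `y⁻` immediately follows
`x⁻` in the word, then (a) neither `(x, y)` nor `(y, x)` is a skew pair, and
(b) for every crossing `z ∉ {x, y}`, `(x, z)` is an upper (resp. lower) skew pair
iff `(y, z)` is, and `(z, x)` is an upper (resp. lower) skew pair iff `(z, y)` is. -/
theorem casson_R2_configuration {C : Type} [Fintype C] [DecidableEq C]
    (G : GaussCode C) (x y : C) (hxy : x ≠ y)
    (himm_over : G.Imm (G.pos x true) (G.pos y true))
    (himm_under : G.Imm (G.pos x false) (G.pos y false)) :
    (¬ G.UpperSkew x y ∧ ¬ G.UpperSkew y x ∧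
      ¬ G.LowerSkew x y ∧ ¬ G.LowerSkew y x) ∧
    (∀ z : C, z ≠ x → z ≠ y →
      (G.UpperSkew x z ↔ G.UpperSkew y z) ∧ (G.LowerSkew x z ↔ G.LowerSkew y z) ∧
      (G.UpperSkew z x ↔ G.UpperSkew z y) ∧ (G.LowerSkew z x ↔ G.LowerSkew z y)) :=
  casson_R2_configuration_general G x y himm_over himm_under
end

section
/- Let G be a signed Gauss code containing three distinct crossings x, y, z with ε(x) = ε(z) = −ε(y), whose word contains the three two-entry blocks x⁺y⁺, y⁻z⁻ and z⁺x⁻ (each block occupying two consecutive positions, the three blocks pairwise disjoint and appearing in any relative order in the word). Let G′ be the code obtained from G by transposing the two entries within each of these three blocks (producing the blocks y⁺x⁺, z⁻y⁻ and x⁻z⁺), keeping all crossing signs unchanged. Then C⁺(G′) = C⁺(G) and C⁻(G′) = C⁻(G). (This is invariance of C± under the third Reidemeister move at the Gauss-code level.) -/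
/-!
Transposing two consecutive entries of the word changes only the relative order of those two
entries, so a pair of crossings can change its skewness only if both crossings are among
`x, y, z`. For the six ordered pairs of distinct crossings among `x, y, z`, the signed
contributions to `C±` cancel, both before and after the move: this is a check over the six
possible orders of the three blocks, and it works whenever the blocks are oriented coherently
(all as in `G`, or all reversed as in `G′`).
-/

open Function

theorem lt_iff_lt_of_notMem_uIoo {β : Type*} [LinearOrder β] {a b c : β}
    (hc : c ∉ Set.uIoo a b) (hca : c ≠ a) (hcb : c ≠ b) : a < c ↔ b < c := by
  rcases le_total a b with h | h
  · rw [Set.uIoo_of_le h, Set.mem_Ioo, not_and_or, not_lt, not_lt] at hc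
    constructor <;> intro <;> rcases hc with hc | hc <;> order
  · rw [Set.uIoo_of_ge h, Set.mem_Ioo, not_and_or, not_lt, not_lt] at hc
    constructor <;> intro <;> rcases hc with hc | hc <;> order

theorem lt_iff_lt_of_notMem_uIoo' {β : Type*} [LinearOrder β] {a b c : β}
    (hc : c ∉ Set.uIoo a b) (hca : c ≠ a) (hcb : c ≠ b) : c < a ↔ c < b := by
  rw [← not_iff_not, not_lt, not_lt, hca.symm.le_iff_lt, hcb.symm.le_iff_lt]
  exact lt_iff_lt_of_notMem_uIoo hc hca hcb

theorem lt_comp_iff_of_notMem_uIoo {α β : Type*} [LinearOrder β] {p : α → β}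
    (hp : Injective p) {τ : α → α} (hτ : Involutive τ)
    (hadj : ∀ u w, p w ∉ Set.uIoo (p u) (p (τ u))) {u v : α} (huv : τ u = v → u = v) :
    p (τ u) < p (τ v) ↔ p u < p v := by
  rcases eq_or_ne u v with rfl | hne
  · simp only [lt_self_iff_false]
  have hvu : τ v ≠ u := fun h => hne (huv (by rw [← h, hτ]))
  have hvτu : τ v ≠ τ u := hτ.injective.ne hne.symm
  calc p (τ u) < p (τ v) ↔ p u < p (τ v) :=
        (lt_iff_lt_of_notMem_uIoo (hadj u _) (hp.ne hvu) (hp.ne hvτu)).symm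
    _ ↔ p u < p v :=
        (lt_iff_lt_of_notMem_uIoo' (hadj v u) (hp.ne hne) (hp.ne hvu.symm)).symm

theorem Finset.sum_filter_eq_sum_filter_of_iff_of_notMem {α M : Type*} [Fintype α]
    [AddCommMonoid M] (s : Finset α) {P Q : α → Prop} [DecidablePred P] [DecidablePred Q]
    (f : α → M) (hPQ : ∀ a ∉ s, P a ↔ Q a) (hP : ∑ a ∈ s with P a, f a = 0)
    (hQ : ∑ a ∈ s with Q a, f a = 0) : ∑ a with P a, f a = ∑ a with Q a, f a := by
  classical
  rw [Finset.sum_filter] at hP hQ ⊢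
  rw [Finset.sum_filter, ← Finset.sum_add_sum_compl s, ← Finset.sum_add_sum_compl s, hP, hQ]
  refine congrArg _ (Finset.sum_congr rfl fun a ha => ?_)
  rw [if_congr (hPQ a (Finset.mem_compl.1 ha)) rfl rfl]

theorem Finset.sum_offDiag_triple {α M : Type*} [DecidableEq α] [AddCommMonoid M] {x y z : α}
    (hxy : x ≠ y) (hyz : y ≠ z) (hxz : x ≠ z) (f : α × α → M) :
    ∑ p ∈ ({x, y, z} : Finset α).offDiag, f p =
      f (x, y) + f (x, z) + f (y, x) + f (y, z) + f (z, x) + f (z, y) := by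
  have : ({x, y, z} : Finset α).offDiag = {(x, y), (x, z), (y, x), (y, z), (z, x), (z, y)} := by
    ext ⟨a, b⟩
    simp only [Finset.mem_offDiag, Finset.mem_insert, Finset.mem_singleton, Prod.mk.injEq]
    constructor
    · rintro ⟨ha | ha | ha, hb | hb | hb, hab⟩ <;> subst ha hb <;> simp_all
    · rintro (h | h | h | h | h | h) <;> simp_all [eq_comm]
  rw [this]
  simp [Finset.sum_insert, hxy, hyz, hxz, hxy.symm, hyz.symm, hxz.symm, add_assoc]

namespace GaussCode

section r3Swap

variable {C : Type} [DecidableEq C]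

def r3Swap (x y z : C) : C × Bool → C × Bool
  | (c, true) =>
    if c = x then (y, true) else if c = y then (x, true) else if c = z then (x, false) else (c, true)
  | (c, false) =>
    if c = x then (z, true) else if c = y then (z, false) else if c = z then (y, false) else (c, false)

variable {x y z : C}

theorem r3Swap_involutive (hxy : x ≠ y) (hyz : y ≠ z) (hxz : x ≠ z) :
    Involutive (r3Swap x y z) := by
  rintro ⟨c, _ | _⟩ <;> simp only [r3Swap] <;> split_ifs <;> simp_all [eq_comm]

theorem eq_or_mem_offDiag_of_r3Swap_eq (hxy : x ≠ y) (hyz : y ≠ z) (hxz : x ≠ z)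
    {u v : C × Bool} (h : r3Swap x y z u = v) :
    u = v ∨ (u.1, v.1) ∈ ({x, y, z} : Finset C).offDiag := by
  subst h
  rcases u with ⟨c, _ | _⟩ <;> simp only [r3Swap] <;> split_ifs <;> simp_all [eq_comm]

end r3Swap

variable {C : Type} [Fintype C] [DecidableEq C]

def occ (G : GaussCode C) (u : C × Bool) : ℤ := G.pos u.1 u.2

def Adjacent (G : GaussCode C) (u v : C × Bool) : Prop :=
  ∀ w, G.occ w ∉ Set.uIoo (G.occ u) (G.occ v)

theorem Imm.adjacent {G : GaussCode C} {c c' : C} {b b' : Bool}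
    (h : G.Imm (G.pos c b) (G.pos c' b')) : G.Adjacent (c, b) (c', b') := fun w hw => by
  rw [occ, occ, Set.uIoo_of_lt h.1] at hw
  exact h.2 w.1 w.2 hw

theorem Adjacent.symm {G : GaussCode C} {u v : C × Bool} (h : G.Adjacent u v) :
    G.Adjacent v u := by
  simpa only [Adjacent, Set.uIoo_comm] using h

theorem Adjacent.lt_or_lt {G : GaussCode C} {a b c d : C × Bool} (hab : G.Adjacent a b)
    (hcd : G.Adjacent c d) (hac : a ≠ c) (hbc : b ≠ c) (had : a ≠ d) :
    G.occ b < G.occ c ∨ G.occ d < G.occ a := by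
  rcases (G.inj.ne hac).lt_or_gt with h | h
  · exact .inl ((lt_iff_lt_of_notMem_uIoo (hab c) (G.inj.ne hac.symm) (G.inj.ne hbc.symm)).1 h)
  · exact .inr ((lt_iff_lt_of_notMem_uIoo (hcd a) (G.inj.ne hac) (G.inj.ne had)).1 h)

variable {x y z : C}

theorem adjacent_r3Swap {G : GaussCode C} (h1 : G.Adjacent (x, true) (y, true))
    (h2 : G.Adjacent (y, false) (z, false)) (h3 : G.Adjacent (z, true) (x, false)) :
    ∀ u, G.Adjacent u (r3Swap x y z u) := by
  rintro ⟨c, _ | _⟩ <;> simp only [r3Swap] <;> split_ifs <;> subst_vars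
  all_goals first
    | assumption | exact Adjacent.symm ‹_›
    | exact fun w => by simp

theorem occ_eq_occ_comp_r3Swap {G G' : GaussCode C}
    (ht1 : G'.pos y true = G.pos x true ∧ G'.pos x true = G.pos y true)
    (ht2 : G'.pos z false = G.pos y false ∧ G'.pos y false = G.pos z false)
    (ht3 : G'.pos x false = G.pos z true ∧ G'.pos z true = G.pos x false)
    (helse : ∀ d : C, d ≠ x → d ≠ y → d ≠ z → ∀ b : Bool, G'.pos d b = G.pos d b) :
    G'.occ = G.occ ∘ r3Swap x y z := by
  funext ⟨c, b⟩
  cases b <;> simp only [occ, r3Swap, comp_apply] <;> split_ifs <;> simp_all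

/- With the blocks oriented as in `G`, the only possible skew pairs among `x, y, z` are `(z, y)`,
`(z, x)` (upper) and `(y, x)`, `(z, x)` (lower); with all blocks reversed they are `(y, z)`, `(x, z)`
and `(x, y)`, `(x, z)`. The two pairs of each kind are skew for the same orders of the blocks, and
their signs are opposite. -/
theorem sum_skew_offDiag_eq_zero (G : GaussCode C) (hxy : x ≠ y) (hyz : y ≠ z) (hxz : x ≠ z)
    (hsx : G.sign x = - G.sign y) (hsz : G.sign z = - G.sign y)
    (hadj : ∀ u, G.Adjacent u (r3Swap x y z u))
    (horient : G.pos x true < G.pos y true ∧ G.pos y false < G.pos z false ∧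
        G.pos z true < G.pos x false ∨
      G.pos y true < G.pos x true ∧ G.pos z false < G.pos y false ∧
        G.pos x false < G.pos z true) :
    ∑ p ∈ ({x, y, z} : Finset C).offDiag with G.UpperSkew p.1 p.2, G.sign p.1 * G.sign p.2 = 0 ∧
    ∑ p ∈ ({x, y, z} : Finset C).offDiag with G.LowerSkew p.1 p.2, G.sign p.1 * G.sign p.2 = 0 := by
  have h1 : G.Adjacent (x, true) (y, true) := by simpa [r3Swap] using hadj (x, true)
  have h2 : G.Adjacent (y, false) (z, false) := by simpa [r3Swap, hxy.symm] using hadj (y, false)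
  have h3 : G.Adjacent (z, true) (x, false) := by
    simpa [r3Swap, hxz.symm, hyz.symm] using hadj (z, true)
  have hyy : G.sign y * G.sign y = 1 := by rcases G.sign_unit y with h | h <;> simp [h]
  rw [Finset.sum_filter, Finset.sum_filter, Finset.sum_offDiag_triple hxy hyz hxz,
    Finset.sum_offDiag_triple hxy hyz hxz]
  simp only [UpperSkew, LowerSkew, hsx, hsz, neg_mul, mul_neg, neg_neg, hyy]
  rcases horient with horient | horient
  · have s12 := h1.lt_or_lt h2 (by grind) (by grind) (by grind)
    have s13 := h1.lt_or_lt h3 (by grind) (by grind) (by grind)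
    have s23 := h2.lt_or_lt h3 (by grind) (by grind) (by grind)
    simp only [occ] at s12 s13 s23
    constructor <;> split_ifs <;> omega
  · have s12 := h1.symm.lt_or_lt h2.symm (by grind) (by grind) (by grind)
    have s13 := h1.symm.lt_or_lt h3.symm (by grind) (by grind) (by grind)
    have s23 := h2.symm.lt_or_lt h3.symm (by grind) (by grind) (by grind)
    simp only [occ] at s12 s13 s23
    constructor <;> split_ifs <;> omega

structure IsR3Move (G G' : GaussCode C) (x y z : C) : Prop where
  ne_xy : x ≠ y
  ne_yz : y ≠ z
  ne_xz : x ≠ z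
  adjacent : ∀ u, G.Adjacent u (r3Swap x y z u)
  occ_eq : G'.occ = G.occ ∘ r3Swap x y z

namespace IsR3Move

variable {G G' : GaussCode C}

theorem involutive (hm : G.IsR3Move G' x y z) : Involutive (r3Swap x y z) :=
  r3Swap_involutive hm.ne_xy hm.ne_yz hm.ne_xz

theorem symm (hm : G.IsR3Move G' x y z) : G'.IsR3Move G x y z where
  ne_xy := hm.ne_xy
  ne_yz := hm.ne_yz
  ne_xz := hm.ne_xz
  adjacent u w := by
    simpa only [hm.occ_eq, comp_apply, hm.involutive u] using
      hm.adjacent (r3Swap x y z u) (r3Swap x y z w)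
  occ_eq := by
    funext u
    simp only [hm.occ_eq, comp_apply, hm.involutive u]

theorem pos_lt_pos_iff (hm : G.IsR3Move G' x y z) {c c' : C}
    (h : (c, c') ∉ ({x, y, z} : Finset C).offDiag) (b b' : Bool) :
    G'.pos c b < G'.pos c' b' ↔ G.pos c b < G.pos c' b' := by
  change G'.occ (c, b) < G'.occ (c', b') ↔ _
  rw [hm.occ_eq]
  exact lt_comp_iff_of_notMem_uIoo G.inj hm.involutive hm.adjacent fun huv =>
    (eq_or_mem_offDiag_of_r3Swap_eq hm.ne_xy hm.ne_yz hm.ne_xz huv).resolve_right h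

theorem upperSkew_iff (hm : G.IsR3Move G' x y z) {d e : C}
    (h : (d, e) ∉ ({x, y, z} : Finset C).offDiag) : G'.UpperSkew d e ↔ G.UpperSkew d e := by
  have h' : (e, d) ∉ ({x, y, z} : Finset C).offDiag := by
    rw [Finset.mem_offDiag] at h ⊢; tauto
  simp only [UpperSkew, hm.pos_lt_pos_iff h, hm.pos_lt_pos_iff h']

theorem lowerSkew_iff (hm : G.IsR3Move G' x y z) {d e : C}
    (h : (d, e) ∉ ({x, y, z} : Finset C).offDiag) : G'.LowerSkew d e ↔ G.LowerSkew d e := by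
  have h' : (e, d) ∉ ({x, y, z} : Finset C).offDiag := by
    rw [Finset.mem_offDiag] at h ⊢; tauto
  simp only [LowerSkew, hm.pos_lt_pos_iff h, hm.pos_lt_pos_iff h']

end IsR3Move

end GaussCode

open GaussCode

/-- third Reidemeister move: suppose `G` contains three distinct
crossings `x, y, z` with `ε(x) = ε(z) = −ε(y)` and its word contains the three
pairwise disjoint two-entry blocks `x⁺y⁺`, `y⁻z⁻`, `z⁺x⁻` (encoded by `Imm`),
in any relative order. Let `G′` be obtained by transposing the two entries within
each block (producing `y⁺x⁺`, `z⁻y⁻`, `x⁻z⁺`), keeping all positions outside the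
blocks and all signs unchanged. Then `C⁺(G′) = C⁺(G)` and `C⁻(G′) = C⁻(G)`. -/
theorem casson_R3_invariance {C : Type} [Fintype C] [DecidableEq C]
    (G G' : GaussCode C) (x y z : C)
    (hxy : x ≠ y) (hyz : y ≠ z) (hxz : x ≠ z)
    (hsx : G.sign x = - G.sign y) (hsz : G.sign z = - G.sign y)
    (hb1 : G.Imm (G.pos x true) (G.pos y true))
    (hb2 : G.Imm (G.pos y false) (G.pos z false))
    (hb3 : G.Imm (G.pos z true) (G.pos x false))
    (ht1 : G'.pos y true = G.pos x true ∧ G'.pos x true = G.pos y true)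
    (ht2 : G'.pos z false = G.pos y false ∧ G'.pos y false = G.pos z false)
    (ht3 : G'.pos x false = G.pos z true ∧ G'.pos z true = G.pos x false)
    (helse : ∀ d : C, d ≠ x → d ≠ y → d ≠ z → ∀ b : Bool, G'.pos d b = G.pos d b)
    (hsign : ∀ d : C, G'.sign d = G.sign d) :
    G'.Cplus = G.Cplus ∧ G'.Cminus = G.Cminus := by
  have hm : G.IsR3Move G' x y z :=
    ⟨hxy, hyz, hxz, adjacent_r3Swap hb1.adjacent hb2.adjacent hb3.adjacent,
      occ_eq_occ_comp_r3Swap ht1 ht2 ht3 helse⟩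
  have hsign' : G'.sign = G.sign := funext hsign
  obtain ⟨hU, hL⟩ := sum_skew_offDiag_eq_zero G hxy hyz hxz hsx hsz hm.adjacent
    (.inl ⟨hb1.1, hb2.1, hb3.1⟩)
  obtain ⟨hU', hL'⟩ := sum_skew_offDiag_eq_zero G' hxy hyz hxz (by rwa [hsign'])
    (by rwa [hsign']) hm.symm.adjacent
    (.inr ⟨by rw [ht1.1, ht1.2]; exact hb1.1, by rw [ht2.1, ht2.2]; exact hb2.1,
      by rw [ht3.1, ht3.2]; exact hb3.1⟩)
  rw [hsign'] at hU' hL'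
  simp only [Cplus, Cminus, Pplus, Pminus, hsign']
  exact ⟨Finset.sum_filter_eq_sum_filter_of_iff_of_notMem _ _ (fun _ hp => hm.upperSkew_iff hp)
      hU' hU,
    Finset.sum_filter_eq_sum_filter_of_iff_of_notMem _ _ (fun _ hp => hm.lowerSkew_iff hp)
      hL' hL⟩
end

section
/- Let G be a ℤ-enriched signed Gauss code containing distinct crossings x and y with ε(y) = −ε(x) and w(y) = w(x), such that the occurrence y⁺ immediately follows x⁺ and the occurrence y⁻ immediately follows x⁻ in the word. Let G′ be obtained from G by deleting all four occurrences of x and y. Then CH⁺(G′) = CH⁺(G) and CH⁻(G′) = CH⁻(G). (This is invariance of the homological extension CH± under the second Reidemeister move, in the annulus case H₁ ≅ ℤ.) -/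
namespace GaussCode

variable {C : Type} [Fintype C] [DecidableEq C]

/-- The code obtained by deleting all four occurrences of the crossings `x` and
`y` (the remaining occurrences keep their positions and markers, signs are
inherited). -/
def erase2 (G : GaussCode C) (x y : C) : GaussCode {d : C // d ≠ x ∧ d ≠ y} where
  pos d b := G.pos d.1 b
  inj := by
    rintro ⟨⟨d, hd⟩, b⟩ ⟨⟨e, he⟩, b'⟩ h
    dsimp only at h
    have h2 := G.inj (a₁ := (d, b)) (a₂ := (e, b')) h
    simp only [Prod.mk.injEq] at h2
    simp only [Prod.mk.injEq, Subtype.mk.injEq]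
    exact h2
  sign d := G.sign d.1
  sign_unit d := G.sign_unit d.1

end GaussCode
/-- A ℤ-enriched signed Gauss code: a signed Gauss code together with a function
`w` assigning to each crossing `c` the class in `H₁(annulus) ≅ ℤ` of the loop
obtained by smoothing `c`. -/
structure EGaussCode (C : Type) [Fintype C] [DecidableEq C] extends GaussCode C where
  w : C → ℤ

namespace EGaussCode

variable {C : Type} [Fintype C] [DecidableEq C]

/-- The subgroup `H(x, y) ≤ ℤ` generated by `w x` and `w y`. -/
def H (G : EGaussCode C) (x y : C) : AddSubgroup ℤ :=
  AddSubgroup.closure {G.w x, G.w y}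

/-- `CH⁺`: the element of the free ℤ-module on the set of subgroups of `ℤ`
given by the sum, over all upper skew pairs `(x, y)`, of `ε(x)·ε(y)` times the
basis element indexed by `H(x, y)`. -/
noncomputable def CHplus (G : EGaussCode C) : AddSubgroup ℤ →₀ ℤ :=
  ∑ p ∈ G.toGaussCode.Pplus,
    Finsupp.single (G.H p.1 p.2) (G.sign p.1 * G.sign p.2)

/-- `CH⁻`: the analogous sum over all lower skew pairs. -/
noncomputable def CHminus (G : EGaussCode C) : AddSubgroup ℤ →₀ ℤ :=
  ∑ p ∈ G.toGaussCode.Pminus,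
    Finsupp.single (G.H p.1 p.2) (G.sign p.1 * G.sign p.2)

/-- The norm `‖q‖`: the sum of the absolute values of the coordinates of `q`. -/
noncomputable def norm (q : AddSubgroup ℤ →₀ ℤ) : ℕ :=
  q.sum fun _ v => v.natAbs

end EGaussCode

namespace EGaussCode

variable {C : Type} [Fintype C] [DecidableEq C]

/-- Deleting all four occurrences of the crossings `x` and `y` from a ℤ-enriched
signed Gauss code. -/
def erase2 (G : EGaussCode C) (x y : C) : EGaussCode {d : C // d ≠ x ∧ d ≠ y} where
  toGaussCode := G.toGaussCode.erase2 x y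
  w d := G.w d.1

end EGaussCode

/-! Since `y⁺` immediately follows `x⁺` and `y⁻` immediately follows `x⁻`, every other
crossing `d` forms an upper (lower) skew pair with `x` exactly when it forms one with `y`,
in either order, and no skew pair lies inside `{x, y}`. As `ε(y) = −ε(x)` and
`H(y, d) = H(x, d)`, the term of `(x, d)` cancels that of `(y, d)`, and the term of `(d, x)`
that of `(d, y)`; what is left is the sum over the skew pairs of `G′`. Lower skew pairs are
the upper skew pairs of the mirror code, in which over and under are exchanged. -/

section CancelPair

variable {C M : Type} [Fintype C] [DecidableEq C] [AddCommMonoid M] {x y : C}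

theorem Fintype.sum_subtype_ne_ne (hxy : x ≠ y) (g : C → M) (hg : g x + g y = 0) :
    ∑ c : {d : C // d ≠ x ∧ d ≠ y}, g c = ∑ c, g c := by
  rw [← Finset.sum_add_sum_compl {x, y} g, Finset.sum_pair hxy, hg, zero_add]
  exact (Finset.sum_subtype _ (by simp) g).symm

theorem Fintype.sum_sum_subtype_ne_ne (hxy : x ≠ y) (g : C → C → M)
    (hleft : ∀ d, g x d + g y d = 0) (hright : ∀ d, g d x + g d y = 0) :
    ∑ a : {d : C // d ≠ x ∧ d ≠ y}, ∑ b : {d : C // d ≠ x ∧ d ≠ y}, g a b =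
      ∑ a, ∑ b, g a b := by
  rw [← Fintype.sum_subtype_ne_ne hxy (fun a => ∑ b, g a b)
    (by simp only [← Finset.sum_add_distrib, hleft, Finset.sum_const_zero])]
  exact Fintype.sum_congr _ _ fun a => Fintype.sum_subtype_ne_ne hxy (g a) (hright a)

end CancelPair

namespace GaussCode

variable {C : Type} [Fintype C] [DecidableEq C]

theorem pos_ne_pos_of_ne (G : GaussCode C) {c d : C} (h : c ≠ d) (b b' : Bool) :
    G.pos c b ≠ G.pos d b' := fun hpos =>
  h (congrArg Prod.fst (G.inj (a₁ := (c, b)) (a₂ := (d, b')) hpos))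

def flip (G : GaussCode C) : GaussCode C where
  pos c b := G.pos c !b
  inj p q h := by
    simpa [Prod.ext_iff] using G.inj (a₁ := (p.1, !p.2)) (a₂ := (q.1, !q.2)) h
  sign := G.sign
  sign_unit := G.sign_unit

theorem imm_flip_iff (G : GaussCode C) {p q : ℤ} : G.flip.Imm p q ↔ G.Imm p q := by
  refine and_congr_right' (forall_congr' fun d => ⟨fun h b => ?_, fun h b => h !b⟩)
  simpa [flip] using h !b

theorem upperSkew_iff_of_imm (G : GaussCode C) {x y : C}
    (hover : G.Imm (G.pos x true) (G.pos y true))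
    (hunder : G.Imm (G.pos x false) (G.pos y false)) (d : C) :
    (G.UpperSkew x d ↔ G.UpperSkew y d) ∧ (G.UpperSkew d x ↔ G.UpperSkew d y) := by
  obtain ⟨hlt_over, hgap_over⟩ := hover
  obtain ⟨hlt_under, hgap_under⟩ := hunder
  have := hgap_over d true; have := hgap_over d false
  have := hgap_under d true; have := hgap_under d false
  by_cases hdx : d = x
  · subst hdx; unfold UpperSkew; omega
  by_cases hdy : d = y
  · subst hdy; unfold UpperSkew; omega
  have hne_x := G.pos_ne_pos_of_ne hdx
  have hne_y := G.pos_ne_pos_of_ne hdy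
  simp only [Bool.forall_bool] at hne_x hne_y
  unfold UpperSkew; omega

theorem lowerSkew_iff_of_imm (G : GaussCode C) {x y : C}
    (hover : G.Imm (G.pos x true) (G.pos y true))
    (hunder : G.Imm (G.pos x false) (G.pos y false)) (d : C) :
    (G.LowerSkew x d ↔ G.LowerSkew y d) ∧ (G.LowerSkew d x ↔ G.LowerSkew d y) :=
  G.flip.upperSkew_iff_of_imm (G.imm_flip_iff.2 hunder) (G.imm_flip_iff.2 hover) d

end GaussCode

namespace EGaussCode

variable {C : Type} [Fintype C] [DecidableEq C]

noncomputable def skewTerm (G : EGaussCode C) (a b : C) : AddSubgroup ℤ →₀ ℤ :=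
  Finsupp.single (G.H a b) (G.sign a * G.sign b)

theorem skewTerm_add_skewTerm_left (G : EGaussCode C) {x y : C}
    (hsign : G.sign y = - G.sign x) (hw : G.w y = G.w x) (d : C) :
    G.skewTerm x d + G.skewTerm y d = 0 := by
  simp only [skewTerm, H, hw, hsign, neg_mul, Finsupp.single_neg, add_neg_cancel]

theorem skewTerm_add_skewTerm_right (G : EGaussCode C) {x y : C}
    (hsign : G.sign y = - G.sign x) (hw : G.w y = G.w x) (d : C) :
    G.skewTerm d x + G.skewTerm d y = 0 := by
  simp only [skewTerm, H, hw, hsign, mul_neg, Finsupp.single_neg, add_neg_cancel]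

theorem sum_filter_skewTerm_erase2 (G : EGaussCode C) {x y : C} (hxy : x ≠ y)
    (hsign : G.sign y = - G.sign x) (hw : G.w y = G.w x)
    (R : C → C → Prop) [DecidableRel R] (hR : ∀ d, (R x d ↔ R y d) ∧ (R d x ↔ R d y)) :
    ∑ p ∈ Finset.univ.filter (fun p : {d // d ≠ x ∧ d ≠ y} × {d // d ≠ x ∧ d ≠ y} =>
          R p.1 p.2),
        (G.erase2 x y).skewTerm p.1 p.2 =
      ∑ p ∈ Finset.univ.filter (fun p : C × C => R p.1 p.2), G.skewTerm p.1 p.2 := by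
  simp only [Finset.sum_filter, Fintype.sum_prod_type]
  refine Fintype.sum_sum_subtype_ne_ne hxy (fun a b => if R a b then G.skewTerm a b else 0)
    (fun d => ?_) (fun d => ?_)
  · simp only [(hR d).1, ite_add_ite, G.skewTerm_add_skewTerm_left hsign hw, add_zero, ite_self]
  · simp only [(hR d).2, ite_add_ite, G.skewTerm_add_skewTerm_right hsign hw, add_zero, ite_self]

end EGaussCode

theorem cassonH_R2_invariance_general {C : Type} [Fintype C] [DecidableEq C]
    (G : EGaussCode C) (x y : C)
    (hsign : G.sign y = - G.sign x) (hw : G.w y = G.w x)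
    (himm_over : G.toGaussCode.Imm (G.pos x true) (G.pos y true))
    (himm_under : G.toGaussCode.Imm (G.pos x false) (G.pos y false)) :
    (G.erase2 x y).CHplus = G.CHplus ∧ (G.erase2 x y).CHminus = G.CHminus := by
  have hxy : x ≠ y := fun h => himm_over.1.ne (by rw [h])
  exact ⟨G.sum_filter_skewTerm_erase2 hxy hsign hw G.UpperSkew
      (G.upperSkew_iff_of_imm himm_over himm_under),
    G.sum_filter_skewTerm_erase2 hxy hsign hw G.LowerSkew
      (G.lowerSkew_iff_of_imm himm_over himm_under)⟩

/-- second Reidemeister move for the homological extension: if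
`x ≠ y` are crossings of a ℤ-enriched signed Gauss code with `ε(y) = −ε(x)` and
`w(y) = w(x)`, such that `y⁺` immediately follows `x⁺` and `y⁻` immediately
follows `x⁻` in the word, then deleting all four occurrences of `x` and `y`
leaves `CH⁺` and `CH⁻` unchanged. -/
theorem cassonH_R2_invariance {C : Type} [Fintype C] [DecidableEq C]
    (G : EGaussCode C) (x y : C) (hxy : x ≠ y)
    (hsign : G.sign y = - G.sign x) (hw : G.w y = G.w x)
    (himm_over : G.toGaussCode.Imm (G.pos x true) (G.pos y true))
    (himm_under : G.toGaussCode.Imm (G.pos x false) (G.pos y false)) :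
    (G.erase2 x y).CHplus = G.CHplus ∧ (G.erase2 x y).CHminus = G.CHminus :=
  cassonH_R2_invariance_general G x y hsign hw himm_over himm_under
end

section
/- Let G be a ℤ-enriched signed Gauss code containing three distinct crossings x, y, z with ε(x) = ε(z) = −ε(y) and w(x) = w(y) + w(z), whose word contains the three two-entry blocks x⁺y⁺, y⁻z⁻ and z⁺x⁻ (each block occupying two consecutive positions, the three blocks pairwise disjoint and appearing in any relative order in the word). Let G′ be obtained from G by transposing the two entries within each of these three blocks (producing the blocks y⁺x⁺, z⁻y⁻ and x⁻z⁺), keeping all crossing signs and all values of w unchanged. Then CH⁺(G′) = CH⁺(G) and CH⁻(G′) = CH⁻(G). (This is invariance of the homological extension CH± under the third Reidemeister move, in the annulus case H₁ ≅ ℤ.) -/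
/-!
A pair of crossings one of which is not among `x, y, z` keeps its relative order under the move,
which only transposes adjacent entries; so only the six ordered pairs inside `{x, y, z}` can
change their skewness. Since `w(x) = w(y) + w(z)`, all of them have `H = ⟨w(y), w(z)⟩`, and since
`ε(x)ε(y) = ε(y)ε(z) = -ε(x)ε(z)`, their total contribution is `⟨w(y), w(z)⟩` times the number of
skew pairs within `{x, z}` minus the number within `{x, y}` or `{y, z}`. Before the move, and
after it, these two numbers agree: this is a check over the six relative orders of the blocks.
-/

namespace GaussCode

variable {C : Type} [Fintype C] [DecidableEq C]

theorem pos_ne (G : GaussCode C) {c c' : C} {b b' : Bool} (h : (c, b) ≠ (c', b')) :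
    G.pos c b ≠ G.pos c' b' :=
  fun e => h (G.inj e)

theorem upperSkew_irrefl (G : GaussCode C) (c : C) : ¬ G.UpperSkew c c :=
  fun h => lt_irrefl _ h.2.1

theorem lowerSkew_irrefl (G : GaussCode C) (c : C) : ¬ G.LowerSkew c c :=
  fun h => lt_irrefl _ h.2.1

theorem Imm.lt_iff_lt {G : GaussCode C} {p q : ℤ} (h : G.Imm p q) {c : C} {b : Bool}
    (hp : G.pos c b ≠ p) (hq : G.pos c b ≠ q) :
    (p < G.pos c b ↔ q < G.pos c b) ∧ (G.pos c b < p ↔ G.pos c b < q) := by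
  have := h.1
  have := h.2 c b
  omega

theorem Imm.lt_or_lt {G : GaussCode C} {a b c d : C} {ba bb bc bd : Bool}
    (h₁ : G.Imm (G.pos a ba) (G.pos b bb)) (h₂ : G.Imm (G.pos c bc) (G.pos d bd))
    (hac : (a, ba) ≠ (c, bc)) (had : (a, ba) ≠ (d, bd))
    (hbc : (b, bb) ≠ (c, bc)) (hbd : (b, bb) ≠ (d, bd)) :
    G.pos b bb < G.pos c bc ∨ G.pos d bd < G.pos a ba := by
  have := h₁.2 c bc
  have := h₁.2 d bd
  have := h₂.2 a ba
  have := G.pos_ne hac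
  have := G.pos_ne had
  have := G.pos_ne hbc
  have := G.pos_ne hbd
  omega

theorem Imm.of_range_subset {G G' : GaussCode C} {p q : ℤ} (h : G.Imm p q)
    (hsub : Set.range (fun o : C × Bool => G'.pos o.1 o.2) ⊆
      Set.range (fun o : C × Bool => G.pos o.1 o.2)) :
    G'.Imm p q := by
  refine ⟨h.1, fun c b hcb => ?_⟩
  obtain ⟨⟨c', b'⟩, hc'⟩ := hsub ⟨(c, b), rfl⟩
  simp only at hc'
  exact h.2 c' b' (hc' ▸ hcb)

theorem skew_congr {G G' : GaussCode C} {u v : C}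
    (huv : ∀ b b', G'.pos u b < G'.pos v b' ↔ G.pos u b < G.pos v b')
    (hvu : ∀ b b', G'.pos v b < G'.pos u b' ↔ G.pos v b < G.pos u b') :
    (G'.UpperSkew u v ↔ G.UpperSkew u v) ∧ (G'.LowerSkew u v ↔ G.LowerSkew u v) := by
  simp [UpperSkew, LowerSkew, huv, hvu]

/-- The blocks `x⁺y⁺`, `y⁻z⁻`, `z⁺x⁻` of a third Reidemeister move. -/
def R3Blocks (G : GaussCode C) (x y z : C) : Prop :=
  G.Imm (G.pos x true) (G.pos y true) ∧ G.Imm (G.pos y false) (G.pos z false) ∧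
    G.Imm (G.pos z true) (G.pos x false)

/-- The blocks `y⁺x⁺`, `z⁻y⁻`, `x⁻z⁺` left behind by the move. -/
def R3BlocksSwapped (G : GaussCode C) (x y z : C) : Prop :=
  G.Imm (G.pos y true) (G.pos x true) ∧ G.Imm (G.pos z false) (G.pos y false) ∧
    G.Imm (G.pos x false) (G.pos z true)

theorem skew_count_of_r3Blocks (G : GaussCode C) {x y z : C}
    (hxy : x ≠ y) (hyz : y ≠ z) (hxz : x ≠ z)
    (h : G.R3Blocks x y z ∨ G.R3BlocksSwapped x y z) :
    ((if G.UpperSkew x y then 1 else 0) + (if G.UpperSkew y x then 1 else 0) +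
        ((if G.UpperSkew y z then 1 else 0) + (if G.UpperSkew z y then 1 else 0)) =
      (if G.UpperSkew x z then 1 else 0) + (if G.UpperSkew z x then (1 : ℤ) else 0)) ∧
    ((if G.LowerSkew x y then 1 else 0) + (if G.LowerSkew y x then 1 else 0) +
        ((if G.LowerSkew y z then 1 else 0) + (if G.LowerSkew z y then 1 else 0)) =
      (if G.LowerSkew x z then 1 else 0) + (if G.LowerSkew z x then (1 : ℤ) else 0)) := by
  rcases h with ⟨hA, hB, hC⟩ | ⟨hA, hB, hC⟩ <;>
  · have := hA.1
    have := hB.1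
    have := hC.1
    have hAB := hA.lt_or_lt hB (by grind) (by grind) (by grind) (by grind)
    have hAC := hA.lt_or_lt hC (by grind) (by grind) (by grind) (by grind)
    have hBC := hB.lt_or_lt hC (by grind) (by grind) (by grind) (by grind)
    simp only [UpperSkew, LowerSkew]
    rcases hAB with hAB | hAB <;> rcases hAC with hAC | hAC <;> rcases hBC with hBC | hBC <;>
      omega

structure IsR3Move_s18 (G G' : GaussCode C) (x y z : C) : Prop where
  blocks : G.R3Blocks x y z
  pos_x_true : G'.pos x true = G.pos y true
  pos_y_true : G'.pos y true = G.pos x true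
  pos_y_false : G'.pos y false = G.pos z false
  pos_z_false : G'.pos z false = G.pos y false
  pos_z_true : G'.pos z true = G.pos x false
  pos_x_false : G'.pos x false = G.pos z true
  pos_of_ne : ∀ d, d ≠ x → d ≠ y → d ≠ z → ∀ b, G'.pos d b = G.pos d b

namespace IsR3Move_s18

variable {G G' : GaussCode C} {x y z : C}

theorem pos_eq_or_imm (h : IsR3Move_s18 G G' x y z) (u : C) (b : Bool) :
    G'.pos u b = G.pos u b ∨ G.Imm (G.pos u b) (G'.pos u b) ∨
      G.Imm (G'.pos u b) (G.pos u b) := by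
  obtain ⟨hA, hB, hC⟩ := h.blocks
  by_cases hx : u = x
  · subst hx
    cases b
    · simp [h.pos_x_false, hC]
    · simp [h.pos_x_true, hA]
  by_cases hy : u = y
  · subst hy
    cases b
    · simp [h.pos_y_false, hB]
    · simp [h.pos_y_true, hA]
  by_cases hz : u = z
  · subst hz
    cases b
    · simp [h.pos_z_false, hB]
    · simp [h.pos_z_true, hC]
  exact Or.inl (h.pos_of_ne u hx hy hz b)

theorem range_pos_subset (h : IsR3Move_s18 G G' x y z) :
    Set.range (fun o : C × Bool => G'.pos o.1 o.2) ⊆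
      Set.range (fun o : C × Bool => G.pos o.1 o.2) := by
  rintro _ ⟨⟨u, b⟩, rfl⟩
  by_cases hx : u = x
  · subst hx
    cases b
    · exact ⟨(z, true), h.pos_x_false.symm⟩
    · exact ⟨(y, true), h.pos_x_true.symm⟩
  by_cases hy : u = y
  · subst hy
    cases b
    · exact ⟨(z, false), h.pos_y_false.symm⟩
    · exact ⟨(x, true), h.pos_y_true.symm⟩
  by_cases hz : u = z
  · subst hz
    cases b
    · exact ⟨(y, false), h.pos_z_false.symm⟩
    · exact ⟨(x, false), h.pos_z_true.symm⟩
  exact ⟨(u, b), (h.pos_of_ne u hx hy hz b).symm⟩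

theorem r3BlocksSwapped (h : IsR3Move_s18 G G' x y z) : G'.R3BlocksSwapped x y z := by
  obtain ⟨hA, hB, hC⟩ := h.blocks
  simp only [R3BlocksSwapped, h.pos_x_true, h.pos_y_true, h.pos_y_false, h.pos_z_false,
    h.pos_z_true, h.pos_x_false]
  exact ⟨hA.of_range_subset h.range_pos_subset, hB.of_range_subset h.range_pos_subset,
    hC.of_range_subset h.range_pos_subset⟩

theorem lt_iff_lt_of_ne (h : IsR3Move_s18 G G' x y z) {d : C} (hdx : d ≠ x) (hdy : d ≠ y)
    (hdz : d ≠ z) (u : C) (bu bd : Bool) :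
    (G'.pos u bu < G'.pos d bd ↔ G.pos u bu < G.pos d bd) ∧
      (G'.pos d bd < G'.pos u bu ↔ G.pos d bd < G.pos u bu) := by
  have hd := h.pos_of_ne d hdx hdy hdz
  rcases eq_or_ne u d with rfl | hud
  · simp [hd]
  have h₁ : G.pos d bd ≠ G.pos u bu := G.pos_ne (by simp [hud.symm])
  have h₂ : G.pos d bd ≠ G'.pos u bu := hd bd ▸ G'.pos_ne (by simp [hud.symm])
  rw [hd bd]
  rcases h.pos_eq_or_imm u bu with e | hI | hI
  · rw [e]
    exact ⟨Iff.rfl, Iff.rfl⟩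
  · exact (hI.lt_iff_lt h₁ h₂).imp Iff.symm Iff.symm
  · exact hI.lt_iff_lt h₂ h₁

theorem skew_iff (h : IsR3Move_s18 G G' x y z) {u v : C}
    (huv : u ∉ ({x, y, z} : Finset C) ∨ v ∉ ({x, y, z} : Finset C)) :
    (G'.UpperSkew u v ↔ G.UpperSkew u v) ∧ (G'.LowerSkew u v ↔ G.LowerSkew u v) := by
  simp only [Finset.mem_insert, Finset.mem_singleton, not_or] at huv
  rcases huv with ⟨hux, huy, huz⟩ | ⟨hvx, hvy, hvz⟩
  · exact skew_congr (fun b b' => (h.lt_iff_lt_of_ne hux huy huz v b' b).2)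
      (fun b b' => (h.lt_iff_lt_of_ne hux huy huz v b b').1)
  · exact skew_congr (fun b b' => (h.lt_iff_lt_of_ne hvx hvy hvz u b b').1)
      (fun b b' => (h.lt_iff_lt_of_ne hvx hvy hvz u b' b).2)

end IsR3Move_s18

end GaussCode

theorem AddSubgroup.closure_pair_add_right {A : Type*} [AddCommGroup A] (a b : A) :
    AddSubgroup.closure {a + b, b} = AddSubgroup.closure {a, b} := by
  ext c
  simp_rw [AddSubgroup.mem_closure_pair]
  exact ⟨fun ⟨m, n, h⟩ => ⟨m, m + n, by rw [← h]; module⟩,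
    fun ⟨m, n, h⟩ => ⟨m, n - m, by rw [← h]; module⟩⟩

namespace EGaussCode

variable {C : Type} [Fintype C] [DecidableEq C]

theorem H_comm (G : EGaussCode C) (u v : C) : G.H u v = G.H v u := by
  rw [H, H, Set.pair_comm]

theorem H_eq_of_w_eq_add (G : EGaussCode C) {x y z : C} (hwx : G.w x = G.w y + G.w z)
    {u v : C} (hu : u ∈ ({x, y, z} : Finset C)) (hv : v ∈ ({x, y, z} : Finset C))
    (huv : u ≠ v) : G.H u v = G.H y z := by
  have hxy : G.H x y = G.H y z := by
    rw [H, H, hwx, add_comm, AddSubgroup.closure_pair_add_right, Set.pair_comm]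
  have hxz : G.H x z = G.H y z := by
    rw [H, H, hwx, AddSubgroup.closure_pair_add_right]
  simp only [Finset.mem_insert, Finset.mem_singleton] at hu hv
  rcases hu with rfl | rfl | rfl <;> rcases hv with rfl | rfl | rfl <;>
    first
    | exact absurd rfl huv
    | rfl
    | exact G.H_comm _ _
    | assumption
    | exact (G.H_comm _ _).trans hxy
    | exact (G.H_comm _ _).trans hxz

/-- The part of a sum shaped like `CH⁺` (`R = UpperSkew`) or `CH⁻` (`R = LowerSkew`) coming from
the pairs in `s`. -/
noncomputable def skewSum (G : EGaussCode C) (R : C → C → Prop) [DecidableRel R]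
    (s : Finset (C × C)) : AddSubgroup ℤ →₀ ℤ :=
  ∑ p ∈ s, if R p.1 p.2 then Finsupp.single (G.H p.1 p.2) (G.sign p.1 * G.sign p.2) else 0

theorem CHplus_eq_skewSum (G : EGaussCode C) : G.CHplus = G.skewSum G.UpperSkew Finset.univ :=
  Finset.sum_filter _ _

theorem CHminus_eq_skewSum (G : EGaussCode C) :
    G.CHminus = G.skewSum G.LowerSkew Finset.univ :=
  Finset.sum_filter _ _

theorem skewSum_univ_eq (G G' : EGaussCode C) (R R' : C → C → Prop) [DecidableRel R]
    [DecidableRel R'] (S : Finset C) (hsign : ∀ d, G'.sign d = G.sign d)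
    (hw : ∀ d, G'.w d = G.w d) (hR : ∀ u v, u ∉ S ∨ v ∉ S → (R' u v ↔ R u v))
    (h' : G'.skewSum R' (S ×ˢ S) = 0) (h : G.skewSum R (S ×ˢ S) = 0) :
    G'.skewSum R' Finset.univ = G.skewSum R Finset.univ := by
  simp only [skewSum] at h h' ⊢
  rw [← Finset.sum_add_sum_compl (S ×ˢ S), ← Finset.sum_add_sum_compl (S ×ˢ S), h, h',
    zero_add, zero_add]
  refine Finset.sum_congr rfl fun p hp => ?_
  rw [Finset.mem_compl, Finset.mem_product, not_and_or] at hp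
  simp only [H, hsign, hw, hR p.1 p.2 hp]

theorem skewSum_triple_eq_zero (G : EGaussCode C) (R : C → C → Prop) [DecidableRel R]
    {x y z : C} (hxy : x ≠ y) (hyz : y ≠ z) (hxz : x ≠ z) (hR : ∀ c, ¬ R c c)
    (hsx : G.sign x = - G.sign y) (hsz : G.sign z = - G.sign y)
    (hwx : G.w x = G.w y + G.w z)
    (hcount : (if R x y then 1 else 0) + (if R y x then 1 else 0) +
        ((if R y z then 1 else 0) + (if R z y then 1 else 0)) =
      (if R x z then 1 else 0) + (if R z x then (1 : ℤ) else 0)) :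
    G.skewSum R ({x, y, z} ×ˢ {x, y, z}) = 0 := by
  have hterm : ∀ p ∈ ({x, y, z} : Finset C) ×ˢ {x, y, z},
      (if R p.1 p.2 then Finsupp.single (G.H p.1 p.2) (G.sign p.1 * G.sign p.2) else 0) =
        Finsupp.single (G.H y z) (G.sign p.1 * G.sign p.2 * if R p.1 p.2 then 1 else 0) := by
    rintro ⟨u, v⟩ hp
    simp only [Finset.mem_product] at hp ⊢
    split_ifs with huv
    · rw [G.H_eq_of_w_eq_add hwx hp.1 hp.2 (by rintro rfl; exact hR _ huv), mul_one]
    · rw [mul_zero, Finsupp.single_zero]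
  have hsum : ∑ p ∈ ({x, y, z} : Finset C) ×ˢ {x, y, z},
      G.sign p.1 * G.sign p.2 * (if R p.1 p.2 then 1 else 0) = 0 := by
    simp only [Finset.sum_product, Finset.mem_insert, Finset.mem_singleton, hxy, hxz, hyz,
      or_self, not_false_eq_true, Finset.sum_insert, Finset.sum_singleton, hR, if_false,
      mul_zero, zero_add, hsx, hsz]
    linear_combination (-(G.sign y * G.sign y)) * hcount
  rw [skewSum, Finset.sum_congr rfl hterm, ← Finsupp.single_finsetSum, hsum, Finsupp.single_zero]

end EGaussCode

/-- third Reidemeister move for the homological extension: suppose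
the ℤ-enriched signed Gauss code `G` contains three distinct crossings `x, y, z`
with `ε(x) = ε(z) = −ε(y)` and `w(x) = w(y) + w(z)`, and its word contains the
three pairwise disjoint two-entry blocks `x⁺y⁺`, `y⁻z⁻`, `z⁺x⁻` (encoded by
`Imm`), in any relative order. Let `G′` be obtained by transposing the two
entries within each block (producing `y⁺x⁺`, `z⁻y⁻`, `x⁻z⁺`), keeping all
positions outside the blocks, all signs, and all values of `w` unchanged. Then
`CH⁺(G′) = CH⁺(G)` and `CH⁻(G′) = CH⁻(G)`. -/
theorem cassonH_R3_invariance {C : Type} [Fintype C] [DecidableEq C]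
    (G G' : EGaussCode C) (x y z : C)
    (hxy : x ≠ y) (hyz : y ≠ z) (hxz : x ≠ z)
    (hsx : G.sign x = - G.sign y) (hsz : G.sign z = - G.sign y)
    (hwx : G.w x = G.w y + G.w z)
    (hb1 : G.toGaussCode.Imm (G.pos x true) (G.pos y true))
    (hb2 : G.toGaussCode.Imm (G.pos y false) (G.pos z false))
    (hb3 : G.toGaussCode.Imm (G.pos z true) (G.pos x false))
    (ht1 : G'.pos y true = G.pos x true ∧ G'.pos x true = G.pos y true)
    (ht2 : G'.pos z false = G.pos y false ∧ G'.pos y false = G.pos z false)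
    (ht3 : G'.pos x false = G.pos z true ∧ G'.pos z true = G.pos x false)
    (helse : ∀ d : C, d ≠ x → d ≠ y → d ≠ z → ∀ b : Bool, G'.pos d b = G.pos d b)
    (hsign : ∀ d : C, G'.sign d = G.sign d)
    (hw : ∀ d : C, G'.w d = G.w d) :
    G'.CHplus = G.CHplus ∧ G'.CHminus = G.CHminus := by
  have hmove : GaussCode.IsR3Move_s18 G.toGaussCode G'.toGaussCode x y z :=
    ⟨⟨hb1, hb2, hb3⟩, ht1.2, ht1.1, ht2.2, ht2.1, ht3.2, ht3.1, helse⟩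
  have hcount := G.skew_count_of_r3Blocks hxy hyz hxz (Or.inl hmove.blocks)
  have hcount' := G'.skew_count_of_r3Blocks hxy hyz hxz (Or.inr hmove.r3BlocksSwapped)
  have hsx' : G'.sign x = - G'.sign y := by rw [hsign, hsign, hsx]
  have hsz' : G'.sign z = - G'.sign y := by rw [hsign, hsign, hsz]
  have hwx' : G'.w x = G'.w y + G'.w z := by rw [hw, hw, hw, hwx]
  rw [G.CHplus_eq_skewSum, G'.CHplus_eq_skewSum, G.CHminus_eq_skewSum, G'.CHminus_eq_skewSum]
  exact ⟨G.skewSum_univ_eq G' _ _ {x, y, z} hsign hw (fun _ _ h => (hmove.skew_iff h).1)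
      (G'.skewSum_triple_eq_zero _ hxy hyz hxz G'.upperSkew_irrefl hsx' hsz' hwx' hcount'.1)
      (G.skewSum_triple_eq_zero _ hxy hyz hxz G.upperSkew_irrefl hsx hsz hwx hcount.1),
    G.skewSum_univ_eq G' _ _ {x, y, z} hsign hw (fun _ _ h => (hmove.skew_iff h).2)
      (G'.skewSum_triple_eq_zero _ hxy hyz hxz G'.lowerSkew_irrefl hsx' hsz' hwx' hcount'.2)
      (G.skewSum_triple_eq_zero _ hxy hyz hxz G.lowerSkew_irrefl hsx hsz hwx hcount.2)⟩
end
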